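/- arXiv:2404.05185 — 6 statements merged into one kernel-verified Lean document; each statement's English description precedes it below -/
import Mathlib

section
/- Let N ≥ 1 be an integer, C₁, C₂ ≥ 0, and let A, B be real N×N matrices with A ∈ M_N(C₁) and B ∈ M_N(C₂). Then AB ∈ M_N(3C₁C₂); that is, |(AB)_{ij}| ≤ 3C₁C₂(δ_{ij} + 1/N) for all 1 ≤ i, j ≤ N. -/
/-- `A ∈ M_N(C)` iff `|A i j| ≤ C (δ_{ij} + 1/N)` for all `i j`. -/
def MemMN {N : ℕ} (C : ℝ) (A : Matrix (Fin N) (Fin N) ℝ) : Prop :=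
  ∀ i j, |A i j| ≤ C * ((if i = j then (1 : ℝ) else 0) + 1 / N)

/-! The profile `δᵢⱼ + 1/N` squares to `δᵢⱼ + 3/N` (the `1/N²` part summed over `N` indices
contributes `1/N`), which is entrywise at most three times the profile. Bounding
`|(AB)ᵢⱼ| ≤ ∑ₖ |Aᵢₖ| |Bₖⱼ|` termwise by `C₁ C₂` times the profile entries gives the claim. -/

open Finset

theorem Matrix.abs_mul_apply_le_sum {l m n R : Type*} [Fintype m] [Ring R] [LinearOrder R]
    [IsOrderedRing R] (A : Matrix l m R) (B : Matrix m n R) (i : l) (j : n) :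
    |(A * B) i j| ≤ ∑ k, |A i k| * |B k j| := by
  simpa only [Matrix.mul_apply, abs_mul] using abs_sum_le_sum_abs (fun k => A i k * B k j) univ

theorem sum_ite_add_inv_card_mul_ite_add_inv_card {n K : Type*} [Fintype n] [DecidableEq n]
    [Field K] (i j : n) :
    ∑ k, ((if i = k then (1 : K) else 0) + 1 / Fintype.card n) *
        ((if k = j then (1 : K) else 0) + 1 / Fintype.card n) =
      (if i = j then (1 : K) else 0) + 3 / Fintype.card n := by
  have hcard : (Fintype.card n : K) * (1 / Fintype.card n) ^ 2 = 1 / Fintype.card n := by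
    rcases eq_or_ne (Fintype.card n : K) 0 with h | h
    · simp [h]
    · field_simp
  simp only [add_mul, mul_add, sum_add_distrib, ite_mul, mul_ite, one_mul, mul_one, zero_mul,
    mul_zero, sum_ite_eq, sum_ite_eq', mem_univ, if_true, sum_const, card_univ, nsmul_eq_mul]
  linear_combination hcard

theorem product_of_MN_classes_general {N : ℕ} {C₁ C₂ : ℝ}
    (hC₁ : 0 ≤ C₁) (hC₂ : 0 ≤ C₂) {A B : Matrix (Fin N) (Fin N) ℝ}
    (hA : MemMN C₁ A) (hB : MemMN C₂ B) :
    MemMN (3 * C₁ * C₂) (A * B) := by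
  intro i j
  have hprofile := sum_ite_add_inv_card_mul_ite_add_inv_card (K := ℝ) i j
  rw [Fintype.card_fin] at hprofile
  calc |(A * B) i j| ≤ ∑ k, |A i k| * |B k j| := Matrix.abs_mul_apply_le_sum A B i j
    _ ≤ ∑ k, C₁ * ((if i = k then 1 else 0) + 1 / N) * (C₂ * ((if k = j then 1 else 0) + 1 / N)) :=
      sum_le_sum fun k _ =>
        mul_le_mul (hA i k) (hB k j) (abs_nonneg _) ((abs_nonneg _).trans (hA i k))
    _ = C₁ * C₂ * ((if i = j then 1 else 0) + 3 / N) := by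
      rw [← hprofile, mul_sum]
      exact sum_congr rfl fun k _ => by ring
    _ ≤ 3 * C₁ * C₂ * ((if i = j then 1 else 0) + 1 / N) := by
      rw [mul_assoc 3, mul_comm 3, mul_assoc (C₁ * C₂)]
      have hδ : (0 : ℝ) ≤ if i = j then 1 else 0 := by split_ifs <;> norm_num
      gcongr
      linarith [show (3 : ℝ) / N = 3 * (1 / N) by ring]

theorem product_of_MN_classes {N : ℕ} (hN : 1 ≤ N) {C₁ C₂ : ℝ}
    (hC₁ : 0 ≤ C₁) (hC₂ : 0 ≤ C₂) {A B : Matrix (Fin N) (Fin N) ℝ}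
    (hA : MemMN C₁ A) (hB : MemMN C₂ B) :
    MemMN (3 * C₁ * C₂) (A * B) :=
  product_of_MN_classes_general hC₁ hC₂ hA hB
end

section
/- For all C₀, C₁, T > 0 there exists a constant C₂ > 0, depending only on C₀, C₁ and T (and in particular independent of N), with the following property: for every integer N ≥ 1, every continuous A : [0,T] → ℝ^{N×N} with A(s) ∈ M_N(C₁) for all s ∈ [0,T], every X₀ ∈ M_N(C₀), and every continuous X : [0,T] → ℝ^{N×N} satisfying X(t) = X₀ + ∫₀ᵗ X(s)A(s) ds for all t ∈ [0,T], one has X(t) ∈ M_N(C₂) for all t ∈ [0,T]. -/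
/-- Uniform-in-`N` propagation of the class `M_N(·)` for solutions of the linear
matrix equation `X(t) = X₀ + ∫₀ᵗ X(s)A(s) ds`. -/
theorem linear_matrix_equation_preserves_MN_class :
    ∀ C₀ C₁ T : ℝ, 0 < C₀ → 0 < C₁ → 0 < T →
    ∃ C₂ : ℝ, 0 < C₂ ∧
      ∀ (N : ℕ), 1 ≤ N →
      ∀ (A : ℝ → Matrix (Fin N) (Fin N) ℝ) (X₀ : Matrix (Fin N) (Fin N) ℝ)
        (X : ℝ → Matrix (Fin N) (Fin N) ℝ),
        (∀ i j, ContinuousOn (fun s => A s i j) (Set.Icc 0 T)) →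
        (∀ s ∈ Set.Icc (0 : ℝ) T, ∀ i j,
          |A s i j| ≤ C₁ * ((if i = j then (1 : ℝ) else 0) + 1 / N)) →
        (∀ i j, |X₀ i j| ≤ C₀ * ((if i = j then (1 : ℝ) else 0) + 1 / N)) →
        (∀ i j, ContinuousOn (fun s => X s i j) (Set.Icc 0 T)) →
        (∀ t ∈ Set.Icc (0 : ℝ) T, ∀ i j,
          X t i j = X₀ i j + ∫ s in (0 : ℝ)..t, (X s * A s) i j) →
        ∀ t ∈ Set.Icc (0 : ℝ) T, ∀ i j,
          |X t i j| ≤ C₂ * ((if i = j then (1 : ℝ) else 0) + 1 / N) := by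
  intro C₀ C₁ T hC₀ hC₁ hT
  refine ⟨C₀ * Real.exp (3 * C₁ * T), by positivity, ?_⟩
  intro N hN A X₀ X hAcont hA hX₀ hXcont heq
  have hNpos : (0:ℝ) < N := by exact_mod_cast Nat.lt_of_lt_of_le Nat.zero_lt_one hN
  set w : Fin N × Fin N → ℝ := fun p => (if p.1 = p.2 then (1:ℝ) else 0) + 1 / N with hw
  have hwpos : ∀ p, 0 < w p := by
    intro p
    have h1 : (0:ℝ) < 1 / N := by positivity
    dsimp [w]; split <;> linarith
  set proj : ℝ → ℝ := fun s => max 0 (min s T) with hproj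
  have hprojc : Continuous proj := continuous_const.max (continuous_id.min continuous_const)
  have hprojmem : ∀ s, proj s ∈ Set.Icc 0 T :=
    fun s => ⟨le_max_left _ _, max_le hT.le (min_le_right _ _)⟩
  have hprojeq : ∀ s ∈ Set.Icc (0:ℝ) T, proj s = s := by
    intro s hs; dsimp [proj]; rw [min_eq_left hs.2, max_eq_right hs.1]
  set g : Fin N × Fin N → ℝ → ℝ := fun p s => (X s * A s) p.1 p.2 with hg
  have hgcont : ∀ p, ContinuousOn (g p) (Set.Icc 0 T) := by
    intro p
    simp only [hg, Matrix.mul_apply]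
    exact continuousOn_finset_sum _ fun k _ => (hXcont p.1 k).mul (hAcont k p.2)
  set h : Fin N × Fin N → ℝ → ℝ := fun p s => g p (proj s) with hh
  have hhc : ∀ p, Continuous (h p) :=
    fun p => (hgcont p).comp_continuous hprojc hprojmem
  set Y : ℝ → (Fin N × Fin N → ℝ) :=
    fun t p => (X₀ p.1 p.2 + ∫ s in (0:ℝ)..t, h p s) / w p with hY
  set Y' : ℝ → (Fin N × Fin N → ℝ) := fun t p => h p t / w p with hY'
  have hderiv : ∀ t, HasDerivAt Y (Y' t) t := by
    intro t
    rw [hasDerivAt_pi]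
    intro p
    exact ((((hhc p).integral_hasStrictDerivAt 0 t).hasDerivAt).const_add _).div_const _
  have hYdiff : Differentiable ℝ Y := fun t => (hderiv t).differentiableAt
  have hYcont : Continuous Y := hYdiff.continuous
  have hYeq : ∀ t ∈ Set.Icc (0:ℝ) T, ∀ p, Y t p = X t p.1 p.2 / w p := by
    intro t ht p
    have hint : (∫ s in (0:ℝ)..t, h p s) = ∫ s in (0:ℝ)..t, g p s := by
      apply intervalIntegral.integral_congr
      intro s hs
      rw [Set.uIcc_of_le ht.1] at hs
      exact congrArg (g p) (hprojeq s ⟨hs.1, hs.2.trans ht.2⟩)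
    dsimp only [Y]
    rw [hint]
    rw [← heq t ht p.1 p.2]
  have hX_le : ∀ t ∈ Set.Icc (0:ℝ) T, ∀ i k, |X t i k| ≤ ‖Y t‖ * w (i, k) := by
    intro t ht i k
    have h1 : ‖Y t (i, k)‖ ≤ ‖Y t‖ := norm_le_pi_norm (Y t) (i, k)
    rw [hYeq t ht (i, k), Real.norm_eq_abs, abs_div, abs_of_pos (hwpos (i, k))] at h1
    calc |X t i k| = |X t i k| / w (i, k) * w (i, k) := by
          rw [div_mul_cancel₀ _ (hwpos (i, k)).ne']
      _ ≤ ‖Y t‖ * w (i, k) := by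
          exact mul_le_mul_of_nonneg_right h1 (hwpos (i, k)).le
  have hsum : ∀ i j : Fin N, ∑ k, w (i, k) * w (k, j) ≤ 3 * w (i, j) := by
    intro i j
    have hterm : ∀ k : Fin N, w (i, k) * w (k, j) =
        (if i = k then (1:ℝ) else 0) * (if k = j then (1:ℝ) else 0)
        + (if i = k then (1:ℝ) else 0) * (1 / N)
        + (1 / N) * (if k = j then (1:ℝ) else 0) + 1 / N * (1 / N) := by
      intro k; dsimp [w]; ring
    rw [Finset.sum_congr rfl (fun k _ => hterm k)]
    have e1 : ∑ k : Fin N, ((if i = k then (1:ℝ) else 0) * (if k = j then (1:ℝ) else 0))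
        = if i = j then (1:ℝ) else 0 := by
      simp [Finset.sum_ite_eq]
    have e2 : ∑ k : Fin N, ((if i = k then (1:ℝ) else 0) * (1 / N)) = 1 / N := by
      simp [Finset.sum_ite_eq]
    have e3 : ∑ k : Fin N, ((1 / (N:ℝ)) * (if k = j then (1:ℝ) else 0)) = 1 / N := by
      simp [Finset.sum_ite_eq']
    have e4 : ∑ _k : Fin N, (1 / (N:ℝ) * (1 / N)) = 1 / N := by
      rw [Finset.sum_const]
      simp [Finset.card_univ]
      field_simp
    simp only [Finset.sum_add_distrib, e1, e2, e3, e4]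
    dsimp [w]
    have : (0:ℝ) ≤ if i = j then (1:ℝ) else 0 := by split <;> norm_num
    split <;> linarith
  have bound : ∀ x ∈ Set.Ico (0:ℝ) T, ‖Y' x‖ ≤ (3 * C₁) * ‖Y x‖ + 0 := by
    intro x hx
    have hx' : x ∈ Set.Icc (0:ℝ) T := ⟨hx.1, hx.2.le⟩
    rw [add_zero]
    have hnY : (0:ℝ) ≤ ‖Y x‖ := norm_nonneg _
    rw [pi_norm_le_iff_of_nonneg (by positivity)]
    intro p
    obtain ⟨i, j⟩ := p
    have hgx : h (i, j) x = g (i, j) x := congrArg (g (i, j)) (hprojeq x hx')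
    have hgb : |g (i, j) x| ≤ 3 * C₁ * ‖Y x‖ * w (i, j) := by
      dsimp [g]
      rw [Matrix.mul_apply]
      calc |∑ k, X x i k * A x k j| ≤ ∑ k, |X x i k * A x k j| :=
            Finset.abs_sum_le_sum_abs _ _
        _ ≤ ∑ k, (‖Y x‖ * w (i, k)) * (C₁ * w (k, j)) := by
            apply Finset.sum_le_sum
            intro k _
            rw [abs_mul]
            exact mul_le_mul (hX_le x hx' i k) (hA x hx' k j) (abs_nonneg _)
              (by positivity)
        _ = (‖Y x‖ * C₁) * ∑ k, w (i, k) * w (k, j) := by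
            rw [Finset.mul_sum]; congr 1; ext k; ring
        _ ≤ (‖Y x‖ * C₁) * (3 * w (i, j)) :=
            mul_le_mul_of_nonneg_left (hsum i j) (by positivity)
        _ = 3 * C₁ * ‖Y x‖ * w (i, j) := by ring
    dsimp only [Y']
    rw [Real.norm_eq_abs, abs_div, abs_of_pos (hwpos (i, j)), div_le_iff₀ (hwpos (i, j))]
    rw [hgx]
    exact hgb
  have hY0 : ‖Y 0‖ ≤ C₀ := by
    rw [pi_norm_le_iff_of_nonneg hC₀.le]
    intro p
    have : Y 0 p = X₀ p.1 p.2 / w p := by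
      dsimp only [Y]; rw [intervalIntegral.integral_same]; ring_nf
    rw [this, Real.norm_eq_abs, abs_div, abs_of_pos (hwpos p), div_le_iff₀ (hwpos p)]
    exact hX₀ p.1 p.2
  have key := norm_le_gronwallBound_of_norm_deriv_right_le hYcont.continuousOn
    (fun x _ => (hderiv x).hasDerivWithinAt) hY0 bound
  intro t ht i j
  have h1 := key t ht
  rw [sub_zero, gronwallBound_ε0] at h1
  have h2 : C₀ * Real.exp (3 * C₁ * t) ≤ C₀ * Real.exp (3 * C₁ * T) := by
    apply mul_le_mul_of_nonneg_left _ hC₀.le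
    exact Real.exp_le_exp.2 (by nlinarith [ht.2, hC₁])
  calc |X t i j| ≤ ‖Y t‖ * w (i, j) := hX_le t ht i j
    _ ≤ (C₀ * Real.exp (3 * C₁ * T)) * w (i, j) :=
        mul_le_mul_of_nonneg_right (h1.trans h2) (hwpos (i, j)).le
    _ = C₀ * Real.exp (3 * C₁ * T) * ((if i = j then (1:ℝ) else 0) + 1 / N) := rfl
end

section
/- For all C₁, T > 0 there exists a constant C̃ > 0, depending only on C₁ and T (and independent of N), such that: for every integer N ≥ 1, every continuous A : [0,T] → ℝ^{N×N} with A(s) ∈ M_N(C₁) for all s, every square-integrable f₀ : [0,T] → ℝ, every x ∈ ℝᴺ, and every continuous X = (X¹,…,Xᴺ) : [0,T] → ℝᴺ satisfying X(t) = x + ∫₀ᵗ ( f₀(s)𝟏 + A(s)X(s) ) ds for all t ∈ [0,T], where 𝟏 = (1,…,1)ᵀ ∈ ℝᴺ, one has |Xⁱ(t)|² ≤ C̃ ( 1 + |xᵢ|² + ∫₀ᵀ |f₀(s)|² ds + (1/N)∑_{j=1}^N |x_j|² ) for every 1 ≤ i ≤ N and every t ∈ [0,T]. -/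
open MeasureTheory

section Aux
open Set Real intervalIntegral

lemma my_gronwall_int {T a K : ℝ} (hT : 0 ≤ T) (ha : 0 ≤ a) (hK : 0 < K)
    {u : ℝ → ℝ} (hu : ContinuousOn u (Set.Icc 0 T)) (hu0 : ∀ t ∈ Set.Icc 0 T, 0 ≤ u t)
    (hle : ∀ t ∈ Set.Icc 0 T, u t ≤ a + K * ∫ s in (0:ℝ)..t, u s) :
    ∀ t ∈ Set.Icc 0 T, u t ≤ a * Real.exp (K * T) := by
  have hproj : ∀ t, max 0 (min t T) ∈ Icc (0:ℝ) T := fun t =>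
    ⟨le_max_left _ _, max_le hT (min_le_right _ _)⟩
  have hvc : Continuous (fun t => u (max 0 (min t T))) :=
    hu.comp_continuous (continuous_const.max (continuous_id.min continuous_const)) hproj
  set v : ℝ → ℝ := fun t => u (max 0 (min t T)) with hv
  have hveq : ∀ t ∈ Icc (0:ℝ) T, v t = u t := by
    intro t ht
    simp [hv, min_eq_left ht.2, max_eq_right ht.1]
  set V : ℝ → ℝ := fun t => ∫ s in (0:ℝ)..t, v s with hV
  have hVd : ∀ t : ℝ, HasDerivAt V (v t) t := by
    intro t
    exact intervalIntegral.integral_hasDerivAt_right (hvc.intervalIntegrable _ _)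
      hvc.stronglyMeasurable.stronglyMeasurableAtFilter hvc.continuousAt
  have hint : ∀ t ∈ Icc (0:ℝ) T, V t = ∫ s in (0:ℝ)..t, u s := by
    intro t ht
    apply intervalIntegral.integral_congr
    intro s hs
    rw [Set.uIcc_of_le ht.1] at hs
    exact hveq s ⟨hs.1, hs.2.trans ht.2⟩
  have hVcont : ContinuousOn V (Icc 0 T) :=
    (continuous_iff_continuousAt.2 fun t => (hVd t).continuousAt).continuousOn
  have hbd := norm_le_gronwallBound_of_norm_deriv_right_le (f := V) (f' := v)
    (δ := 0) (K := K) (ε := a) (a := 0) (b := T) hVcont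
    (fun t _ => (hVd t).hasDerivWithinAt) (by simp [hV]) ?_
  · intro t ht
    have hb := hbd t ht
    rw [gronwallBound_of_K_ne_0 hK.ne'] at hb
    simp only [zero_mul, zero_add, sub_zero] at hb
    have h1 : u t ≤ a + K * V t := by rw [hint t ht]; exact hle t ht
    have h2 : V t ≤ |V t| := le_abs_self _
    have h3 : |V t| ≤ a / K * (Real.exp (K * t) - 1) := hb
    have h4 : Real.exp (K * t) ≤ Real.exp (K * T) :=
      Real.exp_le_exp.2 (by nlinarith [ht.2])
    have h5 : (0:ℝ) < K := hK
    calc u t ≤ a + K * V t := h1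
      _ ≤ a + K * (a / K * (Real.exp (K * t) - 1)) := by nlinarith
      _ = a * Real.exp (K * t) := by field_simp; ring
      _ ≤ a * Real.exp (K * T) := by nlinarith
  · intro t ht
    have htI : t ∈ Icc (0:ℝ) T := ⟨ht.1, ht.2.le⟩
    have h1 : v t = u t := hveq t htI
    have h2 : 0 ≤ u t := hu0 t htI
    rw [Real.norm_eq_abs, h1, abs_of_nonneg h2]
    have : u t ≤ a + K * V t := by rw [hint t htI]; exact hle t htI
    have : V t ≤ |V t| := le_abs_self _
    rw [Real.norm_eq_abs]
    nlinarith

lemma my_abs_intble {T : ℝ} {f : ℝ → ℝ} (hm : Measurable f)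
    (h2 : IntervalIntegrable (fun s => (f s) ^ 2) volume 0 T) :
    IntervalIntegrable (fun s => |f s|) volume 0 T := by
  have hbig : IntervalIntegrable (fun s => (1 + (f s)^2) / 2) volume 0 T :=
    ((_root_.intervalIntegrable_const).add h2).div_const 2
  apply hbig.mono_fun (hm.abs.aestronglyMeasurable.restrict)
  apply Filter.Eventually.of_forall
  intro s
  simp only [Real.norm_eq_abs, abs_abs]
  have h1 : (0:ℝ) ≤ (1 + f s^2)/2 := by positivity
  rw [abs_of_nonneg h1]
  nlinarith [sq_nonneg (|f s| - 1), sq_abs (f s)]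

lemma my_intble {T : ℝ} {f : ℝ → ℝ} (hm : Measurable f)
    (h2 : IntervalIntegrable (fun s => (f s) ^ 2) volume 0 T) :
    IntervalIntegrable f volume 0 T := by
  apply (my_abs_intble hm h2).mono_fun (hm.aestronglyMeasurable.restrict)
  apply Filter.Eventually.of_forall
  intro s
  simp [Real.norm_eq_abs, abs_abs]

lemma my_cs_int {T : ℝ} (hT : 0 < T) {f : ℝ → ℝ} (hm : Measurable f)
    (h2 : IntervalIntegrable (fun s => (f s) ^ 2) volume 0 T) :
    (∫ s in (0:ℝ)..T, |f s|) ^ 2 ≤ T * ∫ s in (0:ℝ)..T, (f s) ^ 2 := by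
  set F := ∫ s in (0:ℝ)..T, |f s| with hFdef
  set P := ∫ s in (0:ℝ)..T, (f s) ^ 2 with hPdef
  have habs := my_abs_intble hm h2
  have hF0 : 0 ≤ F := intervalIntegral.integral_nonneg hT.le (fun s _ => abs_nonneg _)
  have hP0 : 0 ≤ P := intervalIntegral.integral_nonneg hT.le (fun s _ => sq_nonneg _)
  have key : ∀ ε : ℝ, 0 < ε → F ≤ ε * P + T / (4 * ε) := by
    intro ε hε
    have h1 : F ≤ ∫ s in (0:ℝ)..T, (ε * (f s)^2 + 1/(4*ε)) := by
      apply intervalIntegral.integral_mono_on hT.le habs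
      · exact (h2.const_mul ε).add _root_.intervalIntegrable_const
      · intro s _
        have hy : ε*(f s)^2 + 1/(4*ε) - |f s| = (2*ε*|f s| - 1)^2/(4*ε) := by
          field_simp; linear_combination (-4*ε^2) * sq_abs (f s)
        have := div_nonneg (sq_nonneg (2*ε*|f s| - 1)) (by positivity : (0:ℝ) ≤ 4*ε)
        linarith
    have h2' : (∫ s in (0:ℝ)..T, (ε * (f s)^2 + 1/(4*ε)))
        = ε * P + T / (4*ε) := by
      rw [intervalIntegral.integral_add (h2.const_mul ε) _root_.intervalIntegrable_const,
        intervalIntegral.integral_const_mul, intervalIntegral.integral_const]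
      simp [hPdef, smul_eq_mul]
      ring
    rw [h2'] at h1
    exact h1
  rcases eq_or_lt_of_le hF0 with hFz | hFp
  · nlinarith
  rcases eq_or_lt_of_le hP0 with hPz | hPp
  · exfalso
    have hk := key (T / (2 * F)) (by positivity)
    rw [← hPz, mul_zero, zero_add] at hk
    have : T / (4 * (T / (2 * F))) = F / 2 := by field_simp; ring
    rw [this] at hk
    linarith
  · have hk := key (F / (2 * P)) (by positivity)
    have hEq : (F / (2 * P)) * P + T / (4 * (F / (2 * P))) = F / 2 + T * P / (2 * F) := by
      field_simp
      ring
    rw [hEq] at hk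
    have h3 : F * (F/2 + T*P/(2*F)) = F^2/2 + T*P/2 := by field_simp
    nlinarith [mul_le_mul_of_nonneg_left hk (le_of_lt hFp)]

lemma my_alg_3sq (p q r : ℝ) : (p+q+r)^2 ≤ 3*(p^2+q^2+r^2) := by
  nlinarith [sq_nonneg (p-q), sq_nonneg (q-r), sq_nonneg (p-r)]

lemma my_alg_core {D T Q1 Q2 Q3 : ℝ} (hD1 : 1 ≤ D) (hT : 0 ≤ T)
    (h1 : 0 ≤ Q1) (h2 : 0 ≤ Q2) (h3 : 0 ≤ Q3) :
    Q1 + D*(T*Q2) + D*Q3 ≤ D*(1+T)*(1+Q1+Q2+Q3) := by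
  have hD0 : 0 ≤ D := by linarith
  have hDT1 : 1 ≤ D*(1+T) := by nlinarith
  nlinarith [mul_nonneg (sub_nonneg.2 hDT1) h1, mul_nonneg hD0 h2,
    mul_nonneg (mul_nonneg hD0 hT) h3]

end Aux

set_option maxHeartbeats 1000000 in
/-- Uniform-in-`N` second moment bound for the components of the solution of
`X(t) = x + ∫₀ᵗ (f₀(s)𝟏 + A(s)X(s)) ds` with `A(s) ∈ M_N(C₁)`. -/
theorem uniform_component_bound_for_linear_system :
    ∀ C₁ T : ℝ, 0 < C₁ → 0 < T →
    ∃ Ct : ℝ, 0 < Ct ∧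
      ∀ (N : ℕ), 1 ≤ N →
      ∀ (A : ℝ → Matrix (Fin N) (Fin N) ℝ) (f₀ : ℝ → ℝ) (x : Fin N → ℝ)
        (X : ℝ → Fin N → ℝ),
        (∀ i j, ContinuousOn (fun s => A s i j) (Set.Icc 0 T)) →
        (∀ s ∈ Set.Icc (0 : ℝ) T, ∀ i j,
          |A s i j| ≤ C₁ * ((if i = j then (1 : ℝ) else 0) + 1 / N)) →
        Measurable f₀ →
        IntervalIntegrable (fun s => (f₀ s) ^ 2) volume 0 T →
        (∀ i, ContinuousOn (fun s => X s i) (Set.Icc 0 T)) →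
        (∀ t ∈ Set.Icc (0 : ℝ) T, ∀ i,
          X t i = x i + ∫ s in (0 : ℝ)..t, (f₀ s + ∑ j, A s i j * X s j)) →
        ∀ i, ∀ t ∈ Set.Icc (0 : ℝ) T,
          (X t i) ^ 2 ≤ Ct * (1 + (x i) ^ 2 + (∫ s in (0 : ℝ)..T, (f₀ s) ^ 2)
            + (1 / N) * ∑ j, (x j) ^ 2) := by
  intro C₁ T hC hT
  set E : ℝ := Real.exp (2 * C₁ * T) with hE
  set e1 : ℝ := Real.exp (C₁ * T) with he1
  set c : ℝ := C₁ * T * E with hc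
  have hE0 : 0 < E := Real.exp_pos _
  have he10 : 0 < e1 := Real.exp_pos _
  have hc0 : 0 < c := by positivity
  set D : ℝ := (1 + c) ^ 2 with hD
  have hD1 : 1 ≤ D := by nlinarith
  have hD0 : 0 < D := by positivity
  refine ⟨3 * e1 ^ 2 * D * (1 + T), by positivity, ?_⟩
  intro N hN A f₀ x X hAc hAb hfm hf2 hXc hX
  have hT0 : (0:ℝ) ≤ T := hT.le
  have h0mem : (0:ℝ) ∈ Set.Icc (0:ℝ) T := ⟨le_refl _, hT0⟩
  have hN1 : (1:ℝ) ≤ (N:ℝ) := by exact_mod_cast hN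
  have hNpos : (0:ℝ) < (N:ℝ) := lt_of_lt_of_le one_pos hN1
  -- initial condition
  have hX0 : ∀ j, X 0 j = x j := by
    intro j
    have := hX 0 h0mem j
    simpa using this
  -- notation
  set Sf : ℝ → ℝ := fun s => ∑ j, |X s j| with hSf
  set F : ℝ := ∫ s in (0:ℝ)..T, |f₀ s| with hFd
  set P : ℝ := ∫ s in (0:ℝ)..T, (f₀ s)^2 with hPd
  have hF0 : 0 ≤ F := intervalIntegral.integral_nonneg hT0 (fun s _ => abs_nonneg _)
  have hP0 : 0 ≤ P := intervalIntegral.integral_nonneg hT0 (fun s _ => sq_nonneg _)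
  -- continuity
  have hSgc : ContinuousOn Sf (Set.Icc 0 T) :=
    continuousOn_finset_sum _ (fun j _ => (hXc j).abs)
  have hSg0 : ∀ t ∈ Set.Icc (0:ℝ) T, 0 ≤ Sf t :=
    fun t _ => Finset.sum_nonneg (fun j _ => abs_nonneg _)
  -- integrability
  have habsf : IntervalIntegrable (fun s => |f₀ s|) volume 0 T := my_abs_intble hfm hf2
  have hfint : IntervalIntegrable f₀ volume 0 T := my_intble hfm hf2
  have hsub : ∀ t ∈ Set.Icc (0:ℝ) T, Set.uIcc (0:ℝ) t ⊆ Set.uIcc (0:ℝ) T := by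
    intro t ht
    rw [Set.uIcc_of_le ht.1, Set.uIcc_of_le hT0]
    exact Set.Icc_subset_Icc le_rfl ht.2
  have hIccsub : ∀ t ∈ Set.Icc (0:ℝ) T, Set.Icc (0:ℝ) t ⊆ Set.Icc (0:ℝ) T :=
    fun t ht => Set.Icc_subset_Icc le_rfl ht.2
  have hIu : ∀ (i : Fin N), ∀ t ∈ Set.Icc (0:ℝ) T,
      IntervalIntegrable (fun s => |X s i|) volume 0 t := by
    intro i t ht
    apply ContinuousOn.intervalIntegrable
    rw [Set.uIcc_of_le ht.1]
    exact ((hXc i).abs).mono (hIccsub t ht)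
  have hIG : ∀ t ∈ Set.Icc (0:ℝ) T, IntervalIntegrable Sf volume 0 t := by
    intro t ht
    apply ContinuousOn.intervalIntegrable
    rw [Set.uIcc_of_le ht.1]
    exact hSgc.mono (hIccsub t ht)
  have hIf : ∀ t ∈ Set.Icc (0:ℝ) T, IntervalIntegrable (fun s => |f₀ s|) volume 0 t :=
    fun t ht => habsf.mono_set (hsub t ht)
  have hIfF : ∀ t ∈ Set.Icc (0:ℝ) T, (∫ s in (0:ℝ)..t, |f₀ s|) ≤ F := by
    intro t ht
    exact intervalIntegral.integral_mono_interval le_rfl ht.1 ht.2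
      (Filter.Eventually.of_forall (fun s => abs_nonneg _)) habsf
  -- the key per-component integral inequality
  have key1 : ∀ t ∈ Set.Icc (0:ℝ) T, ∀ i, |X t i| ≤ |x i| + (∫ s in (0:ℝ)..t, |f₀ s|)
      + C₁ * (∫ s in (0:ℝ)..t, |X s i|) + (C₁/N) * (∫ s in (0:ℝ)..t, Sf s) := by
    intro t ht i
    have hgc : ContinuousOn (fun s => ∑ j, A s i j * X s j) (Set.Icc 0 T) :=
      continuousOn_finset_sum _ (fun j _ => (hAc i j).mul (hXc j))
    have hIg : IntervalIntegrable (fun s => f₀ s + ∑ j, A s i j * X s j) volume 0 t := by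
      apply (hfint.mono_set (hsub t ht)).add
      apply ContinuousOn.intervalIntegrable
      rw [Set.uIcc_of_le ht.1]
      exact hgc.mono (hIccsub t ht)
    have hptw : ∀ s ∈ Set.Icc (0:ℝ) t, |f₀ s + ∑ j, A s i j * X s j|
        ≤ |f₀ s| + C₁ * |X s i| + (C₁/N) * Sf s := by
      intro s hs
      have hsT : s ∈ Set.Icc (0:ℝ) T := hIccsub t ht hs
      have h1 : |∑ j, A s i j * X s j| ≤ ∑ j, |A s i j * X s j| :=
        Finset.abs_sum_le_sum_abs _ _
      have h2 : ∑ j, |A s i j * X s j|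
          ≤ ∑ j, C₁ * ((if i = j then (1:ℝ) else 0) + 1/N) * |X s j| := by
        apply Finset.sum_le_sum
        intro j _
        rw [abs_mul]
        exact mul_le_mul_of_nonneg_right (hAb s hsT i j) (abs_nonneg _)
      have h3 : ∑ j, C₁ * ((if i = j then (1:ℝ) else 0) + 1/N) * |X s j|
          = C₁ * |X s i| + (C₁/N) * Sf s := by
        have hterm : ∀ j : Fin N, C₁ * ((if i = j then (1:ℝ) else 0) + 1/N) * |X s j|
            = (if i = j then C₁ * |X s j| else 0) + (C₁/N) * |X s j| := by
          intro j
          by_cases h : i = j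
          · simp only [if_pos h]; ring
          · simp only [if_neg h]; ring
        rw [Finset.sum_congr rfl (fun j _ => hterm j), Finset.sum_add_distrib,
          Finset.sum_ite_eq, hSf, ← Finset.mul_sum]
        simp
      calc |f₀ s + ∑ j, A s i j * X s j| ≤ |f₀ s| + |∑ j, A s i j * X s j| := abs_add_le _ _
        _ ≤ |f₀ s| + (C₁ * |X s i| + (C₁/N) * Sf s) := by
            have := h1.trans (h2.trans_eq h3); linarith
        _ = |f₀ s| + C₁ * |X s i| + (C₁/N) * Sf s := by ring
    have hXeq := hX t ht i
    have hstep1 : |X t i| ≤ |x i| + |∫ s in (0:ℝ)..t, (f₀ s + ∑ j, A s i j * X s j)| := by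
      rw [hXeq]; exact abs_add_le _ _
    have hstep2 : |∫ s in (0:ℝ)..t, (f₀ s + ∑ j, A s i j * X s j)|
        ≤ ∫ s in (0:ℝ)..t, |f₀ s + ∑ j, A s i j * X s j| :=
      intervalIntegral.abs_integral_le_integral_abs ht.1
    have hIrhs : IntervalIntegrable
        (fun s => |f₀ s| + C₁ * |X s i| + (C₁/N) * Sf s) volume 0 t :=
      ((hIf t ht).add ((hIu i t ht).const_mul C₁)).add ((hIG t ht).const_mul (C₁/N))
    have hstep3 : (∫ s in (0:ℝ)..t, |f₀ s + ∑ j, A s i j * X s j|)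
        ≤ ∫ s in (0:ℝ)..t, (|f₀ s| + C₁ * |X s i| + (C₁/N) * Sf s) :=
      intervalIntegral.integral_mono_on ht.1 hIg.abs hIrhs hptw
    have hsplit : (∫ s in (0:ℝ)..t, (|f₀ s| + C₁ * |X s i| + (C₁/N) * Sf s))
        = (∫ s in (0:ℝ)..t, |f₀ s|) + C₁ * (∫ s in (0:ℝ)..t, |X s i|)
          + (C₁/N) * (∫ s in (0:ℝ)..t, Sf s) := by
      rw [intervalIntegral.integral_add ((hIf t ht).add ((hIu i t ht).const_mul C₁))
        ((hIG t ht).const_mul (C₁/N)),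
        intervalIntegral.integral_add (hIf t ht) ((hIu i t ht).const_mul C₁),
        intervalIntegral.integral_const_mul, intervalIntegral.integral_const_mul]
    rw [hsplit] at hstep3
    linarith
  -- sum of key1 over i : integral inequality for Sf
  have key2 : ∀ t ∈ Set.Icc (0:ℝ) T,
      Sf t ≤ (Sf 0 + N * F) + (2*C₁) * ∫ s in (0:ℝ)..t, Sf s := by
    intro t ht
    have hswap : ∑ i : Fin N, (∫ s in (0:ℝ)..t, |X s i|) = ∫ s in (0:ℝ)..t, Sf s := by
      rw [← intervalIntegral.integral_finset_sum (fun i _ => hIu i t ht)]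
    have hsum : Sf t ≤ ∑ i : Fin N, (|x i| + (∫ s in (0:ℝ)..t, |f₀ s|)
        + C₁ * (∫ s in (0:ℝ)..t, |X s i|) + (C₁/N) * (∫ s in (0:ℝ)..t, Sf s)) :=
      Finset.sum_le_sum (fun i _ => key1 t ht i)
    have hexp : ∑ i : Fin N, (|x i| + (∫ s in (0:ℝ)..t, |f₀ s|)
        + C₁ * (∫ s in (0:ℝ)..t, |X s i|) + (C₁/N) * (∫ s in (0:ℝ)..t, Sf s))
        = (∑ i : Fin N, |x i|) + N * (∫ s in (0:ℝ)..t, |f₀ s|)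
          + C₁ * (∫ s in (0:ℝ)..t, Sf s) + N * ((C₁/N) * (∫ s in (0:ℝ)..t, Sf s)) := by
      rw [Finset.sum_add_distrib, Finset.sum_add_distrib, Finset.sum_add_distrib,
        Finset.sum_const, Finset.sum_const, Finset.card_univ, Fintype.card_fin,
        ← Finset.mul_sum, hswap]
      simp [nsmul_eq_mul]
    rw [hexp] at hsum
    have hS0eq : (∑ i : Fin N, |x i|) = Sf 0 := by
      simp [hSf, hX0]
    have hNC : (N:ℝ) * ((C₁/N) * (∫ s in (0:ℝ)..t, Sf s)) = C₁ * (∫ s in (0:ℝ)..t, Sf s) := by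
      field_simp
    have hNIf : (N:ℝ) * (∫ s in (0:ℝ)..t, |f₀ s|) ≤ N * F :=
      mul_le_mul_of_nonneg_left (hIfF t ht) hNpos.le
    rw [hS0eq, hNC] at hsum
    linarith
  -- Gronwall for Sf
  set aS : ℝ := Sf 0 + N * F with haS
  have haS0 : 0 ≤ aS := add_nonneg (hSg0 0 h0mem) (mul_nonneg hNpos.le hF0)
  have hGb : ∀ t ∈ Set.Icc (0:ℝ) T, Sf t ≤ aS * E := by
    have := my_gronwall_int hT0 haS0 (by positivity : (0:ℝ) < 2*C₁) hSgc hSg0 key2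
    intro t ht
    exact this t ht
  have hISle : ∀ t ∈ Set.Icc (0:ℝ) T, (∫ s in (0:ℝ)..t, Sf s) ≤ T * (aS * E) := by
    intro t ht
    have h1 : (∫ s in (0:ℝ)..t, Sf s) ≤ ∫ _s in (0:ℝ)..t, (aS * E) :=
      intervalIntegral.integral_mono_on ht.1 (hIG t ht) _root_.intervalIntegrable_const
        (fun s hs => hGb s (hIccsub t ht hs))
    have h2 : (∫ _s in (0:ℝ)..t, (aS * E)) = t * (aS * E) := by
      rw [intervalIntegral.integral_const]; simp
    have h3 : t * (aS * E) ≤ T * (aS * E) :=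
      mul_le_mul_of_nonneg_right ht.2 (mul_nonneg haS0 hE0.le)
    linarith [h1.trans_eq h2]
  -- final component bound via Gronwall
  intro i t ht
  set ai : ℝ := |x i| + F + (C₁/N) * (T * (aS * E)) with hai
  have hai0 : 0 ≤ ai := by
    have : 0 ≤ (C₁/N) * (T * (aS * E)) := by positivity
    have := abs_nonneg (x i)
    unfold ai
    positivity
  have key3 : ∀ t ∈ Set.Icc (0:ℝ) T, |X t i| ≤ ai + C₁ * ∫ s in (0:ℝ)..t, |X s i| := by
    intro t ht
    have h1 := key1 t ht i
    have h2 := hIfF t ht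
    have h3 := hISle t ht
    have h4 : (C₁/N) * (∫ s in (0:ℝ)..t, Sf s) ≤ (C₁/N) * (T * (aS * E)) :=
      mul_le_mul_of_nonneg_left h3 (by positivity)
    unfold ai
    linarith
  have hub : ∀ t ∈ Set.Icc (0:ℝ) T, |X t i| ≤ ai * e1 :=
    my_gronwall_int hT0 hai0 hC ((hXc i).abs) (fun t _ => abs_nonneg _) key3
  -- algebra: collect the constants
  set S2 : ℝ := ∑ j, (x j)^2 with hS2
  have hS20 : 0 ≤ S2 := Finset.sum_nonneg (fun j _ => sq_nonneg _)
  set G0 : ℝ := ∑ j, |x j| with hG0d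
  have hG0nn : 0 ≤ G0 := Finset.sum_nonneg (fun j _ => abs_nonneg _)
  have hSf0 : Sf 0 = G0 := by simp [hSf, hG0d, hX0]
  have hcs2 : G0^2 ≤ N * S2 := by
    have h := sq_sum_le_card_mul_sum_sq (s := (Finset.univ : Finset (Fin N)))
      (f := fun j => |x j|)
    simpa [sq_abs, Finset.card_univ] using h
  have hcsF : F^2 ≤ T * P := my_cs_int hT hfm hf2
  have ha_eq : ai = |x i| + (1+c)*F + c*(G0/N) := by
    unfold ai aS c
    rw [hSf0]
    field_simp
    ring
  -- quantities
  set Q1 : ℝ := (x i)^2 with hQ1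
  set Q3 : ℝ := (1/N) * S2 with hQ3
  have hQ10 : 0 ≤ Q1 := sq_nonneg _
  have hQ30 : 0 ≤ Q3 := by positivity
  have hr1 : (G0/(N:ℝ))^2 ≤ Q3 := by
    rw [div_pow, div_le_iff₀ (by positivity : (0:ℝ) < (N:ℝ)^2)]
    have heq : Q3 * (N:ℝ)^2 = (N:ℝ) * S2 := by unfold Q3; field_simp
    rw [heq]
    exact hcs2
  have hc2D : c^2 ≤ D := by
    have h := hc0.le
    calc c^2 ≤ c^2 + (1 + 2*c) := by linarith
      _ = (1+c)^2 := by ring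
      _ = D := hD.symm
  have hq2 : ((1+c)*F)^2 ≤ D * (T * P) := by
    rw [mul_pow]
    exact mul_le_mul_of_nonneg_left hcsF (by positivity)
  have hr2 : (c*(G0/N))^2 ≤ D * Q3 := by
    rw [mul_pow]
    exact mul_le_mul hc2D hr1 (sq_nonneg _) hD0.le
  have h3sq : ai^2 ≤ 3 * (Q1 + D*(T*P) + D*Q3) := by
    rw [ha_eq]
    have hp : |x i|^2 = Q1 := sq_abs _
    have h := my_alg_3sq (|x i|) ((1+c)*F) (c*(G0/(N:ℝ)))
    linarith
  have hXsq : (X t i)^2 ≤ (ai * e1)^2 := by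
    have h1 := hub t ht
    have h2 : (X t i)^2 = |X t i|^2 := (sq_abs _).symm
    rw [h2]
    exact pow_le_pow_left₀ (abs_nonneg _) h1 2
  have hcore : Q1 + D*(T*P) + D*Q3 ≤ D*(1+T)*(1 + Q1 + P + Q3) :=
    my_alg_core hD1 hT0 hQ10 hP0 hQ30
  calc (X t i)^2 ≤ (ai * e1)^2 := hXsq
    _ = e1^2 * ai^2 := by ring
    _ ≤ e1^2 * (3 * (Q1 + D*(T*P) + D*Q3)) :=
        mul_le_mul_of_nonneg_left h3sq (by positivity)
    _ ≤ e1^2 * (3 * (D*(1+T)*(1 + Q1 + P + Q3))) := by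
        apply mul_le_mul_of_nonneg_left _ (by positivity : (0:ℝ) ≤ e1^2)
        linarith
    _ = 3 * e1^2 * D * (1+T) * (1 + Q1 + P + Q3) := by ring
end

section
/- Let N ≥ 1 be an integer, a, b ≥ 0, and let V : ℝᴺ → ℝ be differentiable and satisfy, for every x ∈ ℝᴺ and every 1 ≤ i ≤ N, |∂_{x_i}V(x)| ≤ (a/N)(1 + x_i² + (1/N)∑_{j=1}^N x_j²)^{1/2} + b/N. Then for all x, y ∈ ℝᴺ, |V(x) − V(y)| ≤ (a + b)·d + 2a·d·(m₁ + m₂)^{1/2}, where d = ((1/N)∑_{i=1}^N (x_i − y_i)²)^{1/2}, m₁ = (1/N)∑_{i=1}^N x_i², and m₂ = (1/N)∑_{i=1}^N y_i². -/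
/-!
By the mean value theorem, `V x - V y = DV(z) (x - y)` for some `z` on the segment `[y, x]`.
Expanding `DV(z)` in coordinates and using `√(1 + zᵢ² + m) ≤ 1 + |zᵢ| + √m`, where
`m = (1/N) ∑ zⱼ²`, two Cauchy–Schwarz inequalities for the normalized sums `(1/N) ∑` bound
`|DV(z) (x - y)|` by `(a + b) d + 2 a d √m`; finally `m ≤ m₁ + m₂` by convexity of the square.
-/

open Finset Real

lemma Real.sqrt_add_le_add_sqrt {x y : ℝ} (hx : 0 ≤ x) (hy : 0 ≤ y) : √(x + y) ≤ √x + √y := by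
  rw [sqrt_le_iff]
  refine ⟨by positivity, ?_⟩
  nlinarith [sq_sqrt hx, sq_sqrt hy, sqrt_nonneg x, sqrt_nonneg y]

lemma Real.mul_sum_mul_le_sqrt_mul_sqrt {ι : Type*} (s : Finset ι) {c : ℝ} (hc : 0 ≤ c)
    (f g : ι → ℝ) :
    c * ∑ i ∈ s, f i * g i ≤ √(c * ∑ i ∈ s, f i ^ 2) * √(c * ∑ i ∈ s, g i ^ 2) := by
  rw [sqrt_mul hc, sqrt_mul hc, mul_mul_mul_comm, mul_self_sqrt hc]
  exact mul_le_mul_of_nonneg_left (sum_mul_le_sqrt_mul_sqrt s f g) hc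

lemma inv_mul_sum_abs_le_sqrt {N : ℕ} (v : Fin N → ℝ) :
    1 / N * ∑ i, |v i| ≤ √(1 / N * ∑ i, v i ^ 2) := by
  have hcs := mul_sum_mul_le_sqrt_mul_sqrt univ (c := 1 / N) (by positivity)
    (fun i => |v i|) (fun _ => 1)
  have hcard : √(1 / (N : ℝ) * ∑ _ : Fin N, (1 : ℝ) ^ 2) ≤ 1 := by
    rw [sqrt_le_one]
    rcases N.eq_zero_or_pos with rfl | hN
    · simp
    · simp [hN.ne']
  simp only [mul_one, sq_abs] at hcs
  exact hcs.trans (mul_le_of_le_one_right (sqrt_nonneg _) hcard)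

lemma sum_sq_le_of_mem_segment {ι : Type*} [Fintype ι] {x y z : ι → ℝ}
    (hz : z ∈ segment ℝ x y) : ∑ i, z i ^ 2 ≤ ∑ i, x i ^ 2 + ∑ i, y i ^ 2 := by
  obtain ⟨s, t, hs, ht, hst, rfl⟩ := hz
  rw [← sum_add_distrib]
  refine sum_le_sum fun i _ => ?_
  simp only [Pi.add_apply, Pi.smul_apply, smul_eq_mul]
  -- convexity of the square: the gap to `s xᵢ² + t yᵢ²` is `s t (xᵢ - yᵢ)²`
  nlinarith [mul_nonneg (mul_nonneg hs ht) (sq_nonneg (x i - y i)),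
    mul_nonneg (sub_nonneg.2 (hst ▸ le_add_of_nonneg_right ht : s ≤ 1)) (sq_nonneg (x i)),
    mul_nonneg (sub_nonneg.2 (hst ▸ le_add_of_nonneg_left hs : t ≤ 1)) (sq_nonneg (y i))]

theorem abs_apply_le_of_abs_apply_single_le {N : ℕ} {a b : ℝ} (ha : 0 ≤ a) (hb : 0 ≤ b)
    (L : (Fin N → ℝ) →ₗ[ℝ] ℝ) (z : Fin N → ℝ)
    (hL : ∀ i, |L (Pi.single i 1)| ≤ a / N * √(1 + z i ^ 2 + 1 / N * ∑ j, z j ^ 2) + b / N)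
    (v : Fin N → ℝ) :
    |L v| ≤ (a + b) * √(1 / N * ∑ i, v i ^ 2)
      + 2 * a * √(1 / N * ∑ i, v i ^ 2) * √(1 / N * ∑ i, z i ^ 2) := by
  set m := 1 / (N : ℝ) * ∑ j, z j ^ 2
  set d := √(1 / N * ∑ i, v i ^ 2)
  have hcoord : ∀ i, |v i * L (Pi.single i 1)|
      ≤ 1 / N * |v i| * (a + b + a * √m) + a * (1 / N * (|v i| * |z i|)) := by
    intro i
    have hsqrt : √(1 + z i ^ 2 + m) ≤ 1 + |z i| + √m := by
      calc √(1 + z i ^ 2 + m) ≤ √(1 + z i ^ 2) + √m :=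
            sqrt_add_le_add_sqrt (by positivity) (by positivity)
        _ ≤ √1 + √(z i ^ 2) + √m := by gcongr; exact sqrt_add_le_add_sqrt zero_le_one (sq_nonneg _)
        _ = 1 + |z i| + √m := by rw [sqrt_one, sqrt_sq_eq_abs]
    calc |v i * L (Pi.single i 1)| = |v i| * |L (Pi.single i 1)| := abs_mul _ _
      _ ≤ |v i| * (a / N * (1 + |z i| + √m) + b / N) := by gcongr; exact (hL i).trans (by gcongr)
      _ = _ := by ring
  have hsum_abs : 1 / N * ∑ i, |v i| ≤ d := inv_mul_sum_abs_le_sqrt v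
  have hsum_mul : 1 / N * ∑ i, |v i| * |z i| ≤ d * √m := by
    simpa only [sq_abs] using mul_sum_mul_le_sqrt_mul_sqrt univ (c := 1 / N) (by positivity)
      (fun i => |v i|) (fun i => |z i|)
  calc |L v| = |∑ i, v i * L (Pi.single i 1)| := by
        conv_lhs => rw [pi_eq_sum_univ' v, map_sum]
        simp only [map_smul, smul_eq_mul]
    _ ≤ ∑ i, |v i * L (Pi.single i 1)| := abs_sum_le_sum_abs _ _
    _ ≤ ∑ i, (1 / N * |v i| * (a + b + a * √m) + a * (1 / N * (|v i| * |z i|))) :=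
        sum_le_sum fun i _ => hcoord i
    _ = (1 / N * ∑ i, |v i|) * (a + b + a * √m) + a * (1 / N * ∑ i, |v i| * |z i|) := by
        rw [sum_add_distrib, ← sum_mul, ← mul_sum, ← mul_sum, ← mul_sum]
    _ ≤ d * (a + b + a * √m) + a * (d * √m) := by gcongr
    _ = _ := by ring

theorem lipschitz_estimate_from_gradient_decay_general {N : ℕ} {a b : ℝ}
    (ha : 0 ≤ a) (hb : 0 ≤ b)
    (V : (Fin N → ℝ) → ℝ) (hV : Differentiable ℝ V)
    (hgrad : ∀ (x : Fin N → ℝ) (i : Fin N),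
      |fderiv ℝ V x (Pi.single i 1)| ≤
        a / N * Real.sqrt (1 + (x i) ^ 2 + (1 / N) * ∑ j, (x j) ^ 2) + b / N) :
    ∀ x y : Fin N → ℝ,
      |V x - V y| ≤
        (a + b) * Real.sqrt ((1 / N) * ∑ i, (x i - y i) ^ 2)
          + 2 * a * Real.sqrt ((1 / N) * ∑ i, (x i - y i) ^ 2) *
            Real.sqrt ((1 / N) * ∑ i, (x i) ^ 2 + (1 / N) * ∑ i, (y i) ^ 2) := by
  intro x y
  obtain ⟨z, hz, hmvt⟩ := domain_mvt (fun w _ => (hV w).hasFDerivAt.hasFDerivWithinAt)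
    convex_univ (Set.mem_univ y) (Set.mem_univ x)
  have hz_sq : 1 / (N : ℝ) * ∑ i, z i ^ 2 ≤ 1 / N * ∑ i, x i ^ 2 + 1 / N * ∑ i, y i ^ 2 := by
    rw [← mul_add, add_comm (∑ i, x i ^ 2)]
    gcongr
    exact sum_sq_le_of_mem_segment hz
  rw [hmvt]
  calc _ ≤ _ := abs_apply_le_of_abs_apply_single_le ha hb (fderiv ℝ V z) z (hgrad z) (x - y)
    _ ≤ _ := by simp only [Pi.sub_apply]; gcongr

/-- A gradient bound of the form
`|∂ᵢV(x)| ≤ (a/N)(1 + xᵢ² + (1/N)∑ⱼxⱼ²)^(1/2) + b/N` implies a locally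
Lipschitz-type estimate for `V`. -/
theorem lipschitz_estimate_from_gradient_decay {N : ℕ} (hN : 1 ≤ N) {a b : ℝ}
    (ha : 0 ≤ a) (hb : 0 ≤ b)
    (V : (Fin N → ℝ) → ℝ) (hV : Differentiable ℝ V)
    (hgrad : ∀ (x : Fin N → ℝ) (i : Fin N),
      |fderiv ℝ V x (Pi.single i 1)| ≤
        a / N * Real.sqrt (1 + (x i) ^ 2 + (1 / N) * ∑ j, (x j) ^ 2) + b / N) :
    ∀ x y : Fin N → ℝ,
      |V x - V y| ≤
        (a + b) * Real.sqrt ((1 / N) * ∑ i, (x i - y i) ^ 2)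
          + 2 * a * Real.sqrt ((1 / N) * ∑ i, (x i - y i) ^ 2) *
            Real.sqrt ((1 / N) * ∑ i, (x i) ^ 2 + (1 / N) * ∑ i, (y i) ^ 2) :=
  lipschitz_estimate_from_gradient_decay_general ha hb V hV hgrad
end

section
/- For every c > 0 there exist constants K > 0 and c̃ ∈ (0,1], depending only on c (and in particular independent of N), with the following property: for every integer N ≥ 1, every T ∈ (0, c̃), every continuous Q, A₁, A₂, B : [0,T] → ℝ^{N×N} satisfying for all s ∈ [0,T] and all 1 ≤ i, j ≤ N the bounds |Q_{ij}(s)| ≤ (c/N)(δ_{ij} + 1/N), |(A₁)_{ij}(s)| ≤ c/N, |(A₂)_{ij}(s)| ≤ c/N, |B_{ij}(s)| ≤ c, every diagonal matrix U ∈ ℝ^{N×N} with |U_{ii}| ≤ c for all i, and every continuous Y : [0,T] → ℝ^{N×N} satisfying the backward matrix Riccati integral equation Y(t) = (1/N)U + ∫ₜᵀ ( Q(s) + Y(s)A₁(s) + A₂(s)Y(s) + Y(s)B(s)Y(s) ) ds for all t ∈ [0,T], one has |Y_{ij}(t)| ≤ (K/N)(δ_{ij} + 1/N) for all 1 ≤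 i, j ≤ N and all t ∈ [0,T]. -/
set_option maxHeartbeats 1000000

/-- Short-time uniform-in-`N` bound for the backward matrix Riccati equation
`Y(t) = (1/N)U + ∫ₜᵀ (Q + Y A₁ + A₂ Y + Y B Y) ds`. -/
theorem riccati_short_time_entrywise_bound :
    ∀ c : ℝ, 0 < c →
    ∃ K : ℝ, 0 < K ∧ ∃ ct : ℝ, 0 < ct ∧ ct ≤ 1 ∧
      ∀ (N : ℕ), 1 ≤ N → ∀ T : ℝ, 0 < T → T < ct →
      ∀ (Q A₁ A₂ B : ℝ → Matrix (Fin N) (Fin N) ℝ)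
        (U : Matrix (Fin N) (Fin N) ℝ) (Y : ℝ → Matrix (Fin N) (Fin N) ℝ),
        (∀ i j, ContinuousOn (fun s => Q s i j) (Set.Icc 0 T)) →
        (∀ i j, ContinuousOn (fun s => A₁ s i j) (Set.Icc 0 T)) →
        (∀ i j, ContinuousOn (fun s => A₂ s i j) (Set.Icc 0 T)) →
        (∀ i j, ContinuousOn (fun s => B s i j) (Set.Icc 0 T)) →
        (∀ i j, ContinuousOn (fun s => Y s i j) (Set.Icc 0 T)) →
        (∀ s ∈ Set.Icc (0 : ℝ) T, ∀ i j,
          |Q s i j| ≤ c / N * ((if i = j then (1 : ℝ) else 0) + 1 / N) ∧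
          |A₁ s i j| ≤ c / N ∧ |A₂ s i j| ≤ c / N ∧ |B s i j| ≤ c) →
        (∀ i j, i ≠ j → U i j = 0) →
        (∀ i, |U i i| ≤ c) →
        (∀ t ∈ Set.Icc (0 : ℝ) T, ∀ i j,
          Y t i j = (1 / N) * U i j +
            ∫ s in t..T, (Q s + Y s * A₁ s + A₂ s * Y s + Y s * B s * Y s) i j) →
        ∀ t ∈ Set.Icc (0 : ℝ) T, ∀ i j,
          |Y t i j| ≤ K / N * ((if i = j then (1 : ℝ) else 0) + 1 / N) := by
  intro c hc
  obtain ⟨K, hKdef⟩ : ∃ K : ℝ, K = 2 * c + 2 := ⟨_, rfl⟩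
  obtain ⟨C, hCdef⟩ : ∃ C : ℝ, C = c + 4 * c * K * (K + 1) := ⟨_, rfl⟩
  have hK0 : 0 < K := by rw [hKdef]; linarith
  have hC0 : 0 < C := by
    rw [hCdef]
    have h4 : (0:ℝ) < 4 * c * K * (K + 1) :=
      mul_pos (mul_pos (by linarith) hK0) (by linarith)
    linarith
  refine ⟨K, hK0, 1 / (C + 1), one_div_pos.2 (by linarith), ?_, ?_⟩
  · rw [div_le_one (by linarith)]; linarith
  intro N hN T hT hTct Q A₁ A₂ B U Y hQc hA₁c hA₂c hBc hYc hbd hUoff hUdiag heq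
  have hN0 : (0 : ℝ) < N := by exact_mod_cast Nat.pos_of_ne_zero (by omega)
  have hN1 : (1 : ℝ) ≤ N := by exact_mod_cast hN
  have hinvN : (0:ℝ) < 1 / N := one_div_pos.2 hN0
  obtain ⟨w, hw⟩ : ∃ w : Fin N → Fin N → ℝ,
      w = fun i j => 1 / N * ((if i = j then (1 : ℝ) else 0) + 1 / N) := ⟨_, rfl⟩
  have hwpos : ∀ i j, 0 < w i j := by
    intro i j
    rw [hw]
    have h0 : (0:ℝ) ≤ if i = j then (1:ℝ) else 0 := by positivity
    nlinarith
  have hw2 : ∀ i j, 1 / (N : ℝ) ^ 2 ≤ w i j := by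
    intro i j
    rw [hw]
    have h0 : (0:ℝ) ≤ if i = j then (1:ℝ) else 0 := by positivity
    have h1 : 1 / (N:ℝ)^2 = 1/N * (1/N) := by ring
    nlinarith
  have hsumrow : ∀ i : Fin N, ∑ k, w i k = 2 / N := by
    intro i
    simp only [hw]
    rw [← Finset.mul_sum, Finset.sum_add_distrib]
    have h1 : ∑ k : Fin N, (if i = k then (1:ℝ) else 0) = 1 := by
      rw [Finset.sum_ite_eq]; simp
    have h2 : ∑ _k : Fin N, (1 / N : ℝ) = 1 := by
      rw [Finset.sum_const, Finset.card_univ, Fintype.card_fin, nsmul_eq_mul]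
      field_simp
    rw [h1, h2]; ring
  have hsumcol : ∀ j : Fin N, ∑ k, w k j = 2 / N := by
    intro j
    simp only [hw]
    rw [← Finset.mul_sum, Finset.sum_add_distrib]
    have h1 : ∑ k : Fin N, (if k = j then (1:ℝ) else 0) = 1 := by
      rw [Finset.sum_ite_eq']; simp
    have h2 : ∑ _k : Fin N, (1 / N : ℝ) = 1 := by
      rw [Finset.sum_const, Finset.card_univ, Fintype.card_fin, nsmul_eq_mul]
      field_simp
    rw [h1, h2]; ring
  have hQw : ∀ i j, c / N * ((if i = j then (1 : ℝ) else 0) + 1 / N) = c * w i j := by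
    intro i j; rw [hw]; ring
  have hU : ∀ i j, |(1 / N : ℝ) * U i j| ≤ c * w i j := by
    intro i j
    rcases eq_or_ne i j with rfl | hij
    · rw [abs_mul, abs_of_pos hinvN]
      simp only [hw]
      rw [if_true]
      have h1 : 1 / (N:ℝ) * |U i i| ≤ 1 / N * c :=
        mul_le_mul_of_nonneg_left (hUdiag i) hinvN.le
      have h2 : (0:ℝ) ≤ c * (1 / N * (1 / N)) :=
        mul_nonneg hc.le (mul_nonneg hinvN.le hinvN.le)
      nlinarith
    · rw [hUoff i j hij]
      simp only [mul_zero, abs_zero]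
      exact le_of_lt (mul_pos hc (hwpos i j))
  have hTC : T * C ≤ 1 := by
    rw [lt_div_iff₀ (by linarith : (0:ℝ) < C + 1)] at hTct
    nlinarith
  -- core estimate
  have key : ∀ t ∈ Set.Icc (0 : ℝ) T,
      (∀ s ∈ Set.Ioc t T, ∀ i j, |Y s i j| ≤ K * w i j) →
      ∀ i j, |Y t i j| ≤ (c + 1) * w i j := by
    intro t ht hbdY i j
    have hint : ∀ s ∈ Set.uIoc t T,
        ‖(Q s + Y s * A₁ s + A₂ s * Y s + Y s * B s * Y s) i j‖ ≤ C * w i j := by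
      intro s hs
      rw [Set.uIoc_of_le ht.2] at hs
      have hsIcc : s ∈ Set.Icc (0 : ℝ) T := ⟨le_trans ht.1 (le_of_lt hs.1), hs.2⟩
      have hQb := (hbd s hsIcc i j).1
      rw [hQw i j] at hQb
      have hYA : |(Y s * A₁ s) i j| ≤ 2 * K * c / N ^ 2 := by
        rw [Matrix.mul_apply]
        calc |∑ k, Y s i k * A₁ s k j| ≤ ∑ k, |Y s i k * A₁ s k j| :=
              Finset.abs_sum_le_sum_abs _ _
          _ ≤ ∑ k, K * w i k * (c / N) := by
              apply Finset.sum_le_sum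
              intro k _
              rw [abs_mul]
              exact mul_le_mul (hbdY s hs i k) (hbd s hsIcc k j).2.1 (abs_nonneg _)
                (mul_nonneg hK0.le (hwpos i k).le)
          _ = 2 * K * c / N ^ 2 := by
              rw [← Finset.sum_mul, ← Finset.mul_sum, hsumrow i]; ring
      have hAY : |(A₂ s * Y s) i j| ≤ 2 * K * c / N ^ 2 := by
        rw [Matrix.mul_apply]
        calc |∑ k, A₂ s i k * Y s k j| ≤ ∑ k, |A₂ s i k * Y s k j| :=
              Finset.abs_sum_le_sum_abs _ _
          _ ≤ ∑ k, c / N * (K * w k j) := by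
              apply Finset.sum_le_sum
              intro k _
              rw [abs_mul]
              exact mul_le_mul (hbd s hsIcc i k).2.2.1 (hbdY s hs k j) (abs_nonneg _)
                (div_nonneg hc.le hN0.le)
          _ = 2 * K * c / N ^ 2 := by
              rw [← Finset.mul_sum, ← Finset.mul_sum, hsumcol j]; ring
      have hYB : ∀ l, |(Y s * B s) i l| ≤ 2 * K * c / N := by
        intro l
        rw [Matrix.mul_apply]
        calc |∑ k, Y s i k * B s k l| ≤ ∑ k, |Y s i k * B s k l| :=
              Finset.abs_sum_le_sum_abs _ _
          _ ≤ ∑ k, K * w i k * c := by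
              apply Finset.sum_le_sum
              intro k _
              rw [abs_mul]
              exact mul_le_mul (hbdY s hs i k) (hbd s hsIcc k l).2.2.2 (abs_nonneg _)
                (mul_nonneg hK0.le (hwpos i k).le)
          _ = 2 * K * c / N := by
              rw [← Finset.sum_mul, ← Finset.mul_sum, hsumrow i]; ring
      have hYBY : |(Y s * B s * Y s) i j| ≤ 4 * c * K ^ 2 / N ^ 2 := by
        rw [Matrix.mul_apply]
        calc |∑ l, (Y s * B s) i l * Y s l j| ≤ ∑ l, |(Y s * B s) i l * Y s l j| :=
              Finset.abs_sum_le_sum_abs _ _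
          _ ≤ ∑ l, 2 * K * c / N * (K * w l j) := by
              apply Finset.sum_le_sum
              intro l _
              rw [abs_mul]
              refine mul_le_mul (hYB l) (hbdY s hs l j) (abs_nonneg _) ?_
              have : (0:ℝ) ≤ 2 * K * c := by nlinarith
              exact div_nonneg this hN0.le
          _ = 4 * c * K ^ 2 / N ^ 2 := by
              rw [← Finset.mul_sum, ← Finset.mul_sum, hsumcol j]; ring
      rw [Real.norm_eq_abs]
      simp only [Matrix.add_apply]
      have htri : |Q s i j + (Y s * A₁ s) i j + (A₂ s * Y s) i j + (Y s * B s * Y s) i j| ≤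
          |Q s i j| + |(Y s * A₁ s) i j| + |(A₂ s * Y s) i j| + |(Y s * B s * Y s) i j| := by
        calc _ ≤ |Q s i j + (Y s * A₁ s) i j + (A₂ s * Y s) i j| + |(Y s * B s * Y s) i j| :=
              abs_add_le _ _
          _ ≤ |Q s i j + (Y s * A₁ s) i j| + |(A₂ s * Y s) i j| + |(Y s * B s * Y s) i j| := by
              have := abs_add_le (Q s i j + (Y s * A₁ s) i j) ((A₂ s * Y s) i j)
              linarith
          _ ≤ _ := by
              have := abs_add_le (Q s i j) ((Y s * A₁ s) i j)
              linarith
      have hrest : 2 * K * c / (N:ℝ) ^ 2 + 2 * K * c / N ^ 2 + 4 * c * K ^ 2 / N ^ 2 =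
          4 * c * K * (K + 1) * (1 / N ^ 2) := by ring
      have hfin : 4 * c * K * (K + 1) * (1 / (N:ℝ) ^ 2) ≤ 4 * c * K * (K + 1) * w i j := by
        refine mul_le_mul_of_nonneg_left (hw2 i j) ?_
        have : (0:ℝ) ≤ 4 * c * K := by nlinarith
        nlinarith
      calc |Q s i j + (Y s * A₁ s) i j + (A₂ s * Y s) i j + (Y s * B s * Y s) i j|
          ≤ c * w i j + (2 * K * c / N ^ 2 + 2 * K * c / N ^ 2 + 4 * c * K ^ 2 / N ^ 2) := by
            linarith
        _ ≤ c * w i j + 4 * c * K * (K + 1) * w i j := by rw [hrest]; linarith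
        _ = C * w i j := by rw [hCdef]; ring
    have hintle :
        |∫ s in t..T, (Q s + Y s * A₁ s + A₂ s * Y s + Y s * B s * Y s) i j| ≤
          C * w i j * |T - t| := by
      have := intervalIntegral.norm_integral_le_of_norm_le_const hint
      simpa [Real.norm_eq_abs] using this
    have habs : |T - t| = T - t := abs_of_nonneg (by linarith [ht.2])
    rw [habs] at hintle
    rw [heq t ht i j]
    have hCw : (0:ℝ) ≤ C * w i j := le_of_lt (mul_pos hC0 (hwpos i j))
    have hTt : C * w i j * (T - t) ≤ C * w i j * T :=
      mul_le_mul_of_nonneg_left (by linarith [ht.1]) hCw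
    have hlast : C * w i j * T ≤ w i j := by
      have h1 : T * C * w i j ≤ 1 * w i j :=
        mul_le_mul_of_nonneg_right hTC (hwpos i j).le
      nlinarith
    calc |(1 / N : ℝ) * U i j + ∫ s in t..T,
          (Q s + Y s * A₁ s + A₂ s * Y s + Y s * B s * Y s) i j|
        ≤ |(1 / N : ℝ) * U i j| +
          |∫ s in t..T, (Q s + Y s * A₁ s + A₂ s * Y s + Y s * B s * Y s) i j| := abs_add_le _ _
      _ ≤ c * w i j + C * w i j * (T - t) := by linarith [hU i j]
      _ ≤ (c + 1) * w i j := by linarith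
  -- bootstrap
  have hcK : c + 1 < K := by rw [hKdef]; linarith
  set G : Set ℝ := {t | t ∈ Set.Icc (0:ℝ) T ∧
      ∀ s ∈ Set.Icc t T, ∀ i j, |Y s i j| ≤ K * w i j} with hG
  have hTG : T ∈ G := by
    refine ⟨⟨le_of_lt hT, le_refl T⟩, ?_⟩
    intro s hs i j
    have hsT : s = T := le_antisymm hs.2 hs.1
    subst hsT
    have h := heq s ⟨le_of_lt hT, le_refl s⟩ i j
    rw [intervalIntegral.integral_same, add_zero] at h
    rw [h]
    calc |(1 / N : ℝ) * U i j| ≤ c * w i j := hU i j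
      _ ≤ K * w i j := by nlinarith [hwpos i j]
  have hGne : G.Nonempty := ⟨T, hTG⟩
  have hGbdd : BddBelow G := ⟨0, fun x hx => hx.1.1⟩
  have ht₀T : sInf G ≤ T := csInf_le hGbdd hTG
  have ht₀0 : 0 ≤ sInf G := le_csInf hGne fun x hx => hx.1.1
  have hIoc : ∀ u ∈ Set.Ioc (sInf G) T, ∀ i j, |Y u i j| ≤ K * w i j := by
    intro u hu i j
    obtain ⟨b, hbG, hbu⟩ := exists_lt_of_csInf_lt hGne hu.1
    exact hbG.2 u ⟨le_of_lt hbu, hu.2⟩ i j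
  have hstrong : ∀ s ∈ Set.Icc (sInf G) T, ∀ i j, |Y s i j| ≤ (c + 1) * w i j := by
    intro s hs i j
    exact key s ⟨le_trans ht₀0 hs.1, hs.2⟩
      (fun u hu i' j' => hIoc u ⟨lt_of_le_of_lt hs.1 hu.1, hu.2⟩ i' j') i j
  have ht₀eq : sInf G = 0 := by
    by_contra h0
    have ht₀pos : 0 < sInf G := lt_of_le_of_ne ht₀0 (Ne.symm h0)
    have hev : ∀ᶠ s in nhdsWithin (sInf G) (Set.Icc 0 T),
        ∀ i j, |Y s i j| < K * w i j := by
      rw [Filter.eventually_all]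
      intro i
      rw [Filter.eventually_all]
      intro j
      have hcw := hYc i j (sInf G) ⟨ht₀0, ht₀T⟩
      have htend : Filter.Tendsto (fun s => |Y s i j|)
          (nhdsWithin (sInf G) (Set.Icc 0 T)) (nhds |Y (sInf G) i j|) :=
        (continuous_abs.tendsto _).comp hcw
      refine htend.eventually_lt_const ?_
      calc |Y (sInf G) i j| ≤ (c + 1) * w i j := hstrong _ ⟨le_refl _, ht₀T⟩ i j
        _ < K * w i j := mul_lt_mul_of_pos_right hcK (hwpos i j)
    obtain ⟨ε, hε, hball⟩ := Metric.mem_nhdsWithin_iff.1 hev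
    have hs₁0 : 0 ≤ max 0 (sInf G - ε / 2) := le_max_left _ _
    have hs₁lt : max 0 (sInf G - ε / 2) < sInf G := max_lt ht₀pos (by linarith)
    have hs₁T : max 0 (sInf G - ε / 2) ≤ T := le_trans (le_of_lt hs₁lt) ht₀T
    have hs₁G : max 0 (sInf G - ε / 2) ∈ G := by
      refine ⟨⟨hs₁0, hs₁T⟩, ?_⟩
      intro u hu i j
      rcases le_or_gt (sInf G) u with hcase | hcase
      · calc |Y u i j| ≤ (c + 1) * w i j := hstrong u ⟨hcase, hu.2⟩ i j
          _ ≤ K * w i j := le_of_lt (mul_lt_mul_of_pos_right hcK (hwpos i j))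
      · have huIcc : u ∈ Set.Icc (0:ℝ) T := ⟨le_trans hs₁0 hu.1, hu.2⟩
        have hdist : dist u (sInf G) < ε := by
          rw [Real.dist_eq, abs_of_nonpos (by linarith)]
          have h1 : sInf G - ε / 2 ≤ max 0 (sInf G - ε / 2) := le_max_right _ _
          have h2 := hu.1
          linarith
        exact le_of_lt (hball ⟨Metric.mem_ball.2 hdist, huIcc⟩ i j)
    have : sInf G ≤ max 0 (sInf G - ε / 2) := csInf_le hGbdd hs₁G
    linarith
  intro t ht i j
  have hgoal : K / (N:ℝ) * ((if i = j then (1:ℝ) else 0) + 1 / N) = K * w i j := by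
    rw [hw]; ring
  rw [hgoal]
  calc |Y t i j| ≤ (c + 1) * w i j := hstrong t (by rw [ht₀eq]; exact ht) i j
    _ ≤ K * w i j := le_of_lt (mul_lt_mul_of_pos_right hcK (hwpos i j))
end

section
/- Let N ≥ 1 be an integer, T > 0 and c ≥ 0. Let Q, B : [0,T] → ℝ^{N×N} be continuous and symmetric-matrix valued, A : [0,T] → ℝ^{N×N} continuous, and U ∈ ℝ^{N×N} symmetric. Let Y : [0,T] → ℝ^{N×N} be continuously differentiable, symmetric-matrix valued, and satisfy the terminal value matrix Riccati equation Y′(t) = −( Q(t) + Y(t)A(t) + A(t)ᵀY(t) + Y(t)B(t)Y(t) ) for t ∈ [0,T], with Y(T) = U. (i) If Q(t) ⪰ 0 for all t ∈ [0,T] and U ⪰ 0, then Y(t) ⪰ 0 for all t ∈ [0,T]. (ii) If in addition B(t) ⪯ 0 for all t, ξᵀQ(t)ξ ≤ (c/N)|ξ|² and |A(t)ξ| ≤ c|ξ| for all t and ξ ∈ ℝᴺ, and ξᵀUξ ≤ (c/N)|ξ|² for all ξ, then there exists a constant C̃ > 0, depending only on c and T (and independent of N), such that 0 ≤ ξᵀY(t)ξ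 ≤ (C̃/N)|ξ|² for all t ∈ [0,T] and all ξ ∈ ℝᴺ. -/
/-- The quadratic form `ξᵀ S ξ` of a matrix `S`. -/
def quadForm {N : ℕ} (S : Matrix (Fin N) (Fin N) ℝ) (ξ : Fin N → ℝ) : ℝ :=
  ∑ i, ∑ j, ξ i * S i j * ξ j

/-- `Y` is a (continuously differentiable, symmetric) solution on `[0,T]` of the
terminal value matrix Riccati equation
`Y′ = −(Q + Y A + Aᵀ Y + Y B Y)`, `Y(T) = U`, with continuous symmetric data. -/
def IsRiccatiSolution (N : ℕ) (T : ℝ) (Q B A : ℝ → Matrix (Fin N) (Fin N) ℝ)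
    (U : Matrix (Fin N) (Fin N) ℝ) (Y : ℝ → Matrix (Fin N) (Fin N) ℝ) : Prop :=
  (∀ i j, ContinuousOn (fun t => Q t i j) (Set.Icc 0 T)) ∧
  (∀ i j, ContinuousOn (fun t => B t i j) (Set.Icc 0 T)) ∧
  (∀ i j, ContinuousOn (fun t => A t i j) (Set.Icc 0 T)) ∧
  (∀ t ∈ Set.Icc (0 : ℝ) T, (Q t).transpose = Q t) ∧
  (∀ t ∈ Set.Icc (0 : ℝ) T, (B t).transpose = B t) ∧
  U.transpose = U ∧
  (∀ t ∈ Set.Icc (0 : ℝ) T, (Y t).transpose = Y t) ∧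
  (∀ i j, ∀ t ∈ Set.Icc (0 : ℝ) T, HasDerivAt (fun s => Y s i j)
    ((-(Q t + Y t * A t + (A t).transpose * Y t + Y t * B t * Y t)) i j) t) ∧
  Y T = U

open Matrix Set Finset

namespace Riccati

variable {N : ℕ}

lemma quadForm_eq (S : Matrix (Fin N) (Fin N) ℝ) (ξ : Fin N → ℝ) :
    quadForm S ξ = ξ ⬝ᵥ S *ᵥ ξ := by
  simp [quadForm, dotProduct, Matrix.mulVec, Finset.mul_sum, mul_assoc]

lemma quadForm_add (S S' : Matrix (Fin N) (Fin N) ℝ) (ξ : Fin N → ℝ) :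
    quadForm (S + S') ξ = quadForm S ξ + quadForm S' ξ := by
  simp [quadForm, Matrix.add_apply, mul_add, add_mul, Finset.sum_add_distrib]

lemma quadForm_neg (S : Matrix (Fin N) (Fin N) ℝ) (ξ : Fin N → ℝ) :
    quadForm (-S) ξ = -quadForm S ξ := by
  simp [quadForm, Matrix.neg_apply, Finset.sum_neg_distrib]

lemma quadForm_sub (S S' : Matrix (Fin N) (Fin N) ℝ) (ξ : Fin N → ℝ) :
    quadForm (S - S') ξ = quadForm S ξ - quadForm S' ξ := by
  simp [quadForm, Matrix.sub_apply, mul_sub, sub_mul, Finset.sum_sub_distrib]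

lemma quadForm_smul_one (a : ℝ) (ξ : Fin N → ℝ) :
    quadForm (a • (1 : Matrix (Fin N) (Fin N) ℝ)) ξ = a * ∑ i, ξ i ^ 2 := by
  simp [quadForm, Matrix.smul_apply, Matrix.one_apply, mul_ite, Finset.mul_sum,
    Finset.sum_ite_eq, pow_two]
  ring_nf
  exact Finset.sum_congr rfl fun i _ => by ring

lemma quadForm_smul_vec (S : Matrix (Fin N) (Fin N) ℝ) (r : ℝ) (ξ : Fin N → ℝ) :
    quadForm S (r • ξ) = r ^ 2 * quadForm S ξ := by
  rw [quadForm_eq, quadForm_eq, Matrix.mulVec_smul, smul_dotProduct, dotProduct_smul]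
  simp [smul_eq_mul]; ring

lemma quadForm_transpose (S : Matrix (Fin N) (Fin N) ℝ) (ξ : Fin N → ℝ) :
    quadForm S.transpose ξ = quadForm S ξ := by
  rw [quadForm, Finset.sum_comm]
  simp only [Matrix.transpose_apply]
  exact Finset.sum_congr rfl fun i _ => Finset.sum_congr rfl fun j _ => by ring

lemma quadForm_zero_vec (S : Matrix (Fin N) (Fin N) ℝ) :
    quadForm S 0 = 0 := by simp [quadForm]

/-- null vector of PSD symmetric matrix -/
lemma mulVec_eq_zero_of_psd (S : Matrix (Fin N) (Fin N) ℝ) (hsym : S.transpose = S)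
    (hpsd : ∀ η, 0 ≤ quadForm S η) (ξ : Fin N → ℝ) (h0 : quadForm S ξ = 0) :
    S *ᵥ ξ = 0 := by
  have h1 : ∀ x y : Fin N → ℝ, x ⬝ᵥ S *ᵥ y = (S *ᵥ x) ⬝ᵥ y := fun x y => by
    rw [Matrix.dotProduct_mulVec, ← Matrix.mulVec_transpose, hsym]
  have key : ∀ η : Fin N → ℝ, η ⬝ᵥ S *ᵥ ξ = 0 := by
    intro η
    set a := quadForm S η with ha
    set b := η ⬝ᵥ S *ᵥ ξ with hb
    have ha0 : 0 ≤ a := hpsd η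
    have hcross : ξ ⬝ᵥ S *ᵥ η = b := by
      rw [h1, dotProduct_comm, hb, Matrix.dotProduct_mulVec, ← Matrix.mulVec_transpose, hsym]
    have h0' : ξ ⬝ᵥ S *ᵥ ξ = 0 := by rw [← quadForm_eq]; exact h0
    have ha' : η ⬝ᵥ S *ᵥ η = a := (quadForm_eq S η).symm
    have hexp : ∀ s : ℝ, 0 ≤ s ^ 2 * a + 2 * s * b := by
      intro s
      have h := hpsd (ξ + s • η)
      rw [quadForm_eq] at h
      simp only [Matrix.mulVec_add, Matrix.mulVec_smul, dotProduct_add, add_dotProduct,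
        dotProduct_smul, smul_dotProduct, smul_eq_mul] at h
      rw [h0', hcross, ha', ← hb] at h
      nlinarith [h]
    have hfin := hexp (-b / (a + 1))
    have hpos : (0:ℝ) < a + 1 := by linarith
    have h2 : (-b / (a + 1)) ^ 2 * a + 2 * (-b / (a + 1)) * b
        = -(b ^ 2 * (a + 2)) / (a + 1) ^ 2 := by
      field_simp; ring
    rw [h2] at hfin
    have h3 : b ^ 2 * (a + 2) ≤ 0 := by
      by_contra hc
      push_neg at hc
      have : -(b ^ 2 * (a + 2)) / (a + 1) ^ 2 < 0 :=
        div_neg_of_neg_of_pos (by linarith) (by positivity)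
      linarith
    nlinarith [sq_nonneg b]
  funext i
  have := key (Pi.single i 1)
  simpa [dotProduct, Pi.single_apply] using this



lemma hasDerivAt_quadForm {Z : ℝ → Matrix (Fin N) (Fin N) ℝ} {Z' : Matrix (Fin N) (Fin N) ℝ}
    {t : ℝ} (h : ∀ i j, HasDerivAt (fun s => Z s i j) (Z' i j) t) (ξ : Fin N → ℝ) :
    HasDerivAt (fun s => quadForm (Z s) ξ) (quadForm Z' ξ) t := by
  unfold quadForm
  exact HasDerivAt.fun_sum fun i _ => HasDerivAt.fun_sum fun j _ =>
    (((h i j).const_mul (ξ i)).mul_const (ξ j)).congr_deriv (by ring)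

lemma dot_le_sqrt (ξ v : Fin N → ℝ) :
    ξ ⬝ᵥ v ≤ Real.sqrt (∑ i, ξ i ^ 2) * Real.sqrt (∑ i, v i ^ 2) := by
  have h := Finset.sum_mul_sq_le_sq_mul_sq Finset.univ ξ v
  have h2 : ξ ⬝ᵥ v ≤ |ξ ⬝ᵥ v| := le_abs_self _
  have h3 : |ξ ⬝ᵥ v| = Real.sqrt ((ξ ⬝ᵥ v) ^ 2) := (Real.sqrt_sq_eq_abs _).symm
  calc ξ ⬝ᵥ v ≤ Real.sqrt ((ξ ⬝ᵥ v) ^ 2) := h3 ▸ h2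
    _ ≤ Real.sqrt ((∑ i, ξ i ^ 2) * ∑ i, v i ^ 2) := by
        apply Real.sqrt_le_sqrt
        simpa [dotProduct] using h
    _ = _ := Real.sqrt_mul (by positivity) _

/-- From positivity on the unit sphere, nonnegativity everywhere. -/
lemma nonneg_of_unit_pos {S : Matrix (Fin N) (Fin N) ℝ}
    (h : ∀ ξ, (∑ i, ξ i ^ 2) = 1 → 0 < quadForm S ξ) (ξ : Fin N → ℝ) :
    0 ≤ quadForm S ξ := by
  rcases eq_or_ne ξ 0 with rfl | hξ
  · simp [quadForm]
  · have hs : 0 < ∑ i, ξ i ^ 2 := by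
      have : ∃ i, ξ i ≠ 0 := by
        by_contra hc; push_neg at hc; exact hξ (funext hc)
      obtain ⟨i, hi⟩ := this
      have : 0 < ξ i ^ 2 := by positivity
      exact lt_of_lt_of_le this (Finset.single_le_sum (fun j _ => sq_nonneg (ξ j)) (mem_univ i))
    set r := (Real.sqrt (∑ i, ξ i ^ 2))⁻¹ with hr
    have hrpos : 0 < r := by positivity
    have hunit : (∑ i, (r • ξ) i ^ 2) = 1 := by
      simp only [Pi.smul_apply, smul_eq_mul, mul_pow, ← Finset.mul_sum]
      rw [hr, ← Real.sqrt_inv, Real.sq_sqrt (by positivity)]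
      field_simp
    have hq := h (r • ξ) hunit
    rw [quadForm_smul_vec] at hq
    nlinarith [sq_nonneg r]

lemma le_of_unit_le {S : Matrix (Fin N) (Fin N) ℝ} {C : ℝ} (hC : 0 ≤ C)
    (h : ∀ ξ, (∑ i, ξ i ^ 2) = 1 → quadForm S ξ ≤ C) (ξ : Fin N → ℝ) :
    quadForm S ξ ≤ C * ∑ i, ξ i ^ 2 := by
  rcases eq_or_ne ξ 0 with rfl | hξ
  · simp [quadForm]
  · have hs : 0 < ∑ i, ξ i ^ 2 := by
      have : ∃ i, ξ i ≠ 0 := by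
        by_contra hc; push_neg at hc; exact hξ (funext hc)
      obtain ⟨i, hi⟩ := this
      have : 0 < ξ i ^ 2 := by positivity
      exact lt_of_lt_of_le this (Finset.single_le_sum (fun j _ => sq_nonneg (ξ j)) (mem_univ i))
    set r := (Real.sqrt (∑ i, ξ i ^ 2))⁻¹ with hr
    have hrpos : 0 < r := by positivity
    have hr2 : r ^ 2 = (∑ i, ξ i ^ 2)⁻¹ := by
      rw [hr, ← Real.sqrt_inv, Real.sq_sqrt (by positivity)]
    have hunit : (∑ i, (r • ξ) i ^ 2) = 1 := by
      simp only [Pi.smul_apply, smul_eq_mul, mul_pow, ← Finset.mul_sum, hr2]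
      field_simp
    have hq := h (r • ξ) hunit
    rw [quadForm_smul_vec, hr2] at hq
    have h5 : (∑ i, ξ i ^ 2) * ((∑ i, ξ i ^ 2)⁻¹ * quadForm S ξ) = quadForm S ξ := by
      field_simp
    have := mul_le_mul_of_nonneg_left hq (le_of_lt hs)
    rw [h5] at this
    linarith [this]

lemma key (T : ℝ) (hT : 0 < T)
    (Z Z' : ℝ → Matrix (Fin N) (Fin N) ℝ)
    (hsym : ∀ t ∈ Icc (0:ℝ) T, (Z t).transpose = Z t)
    (hderiv : ∀ i j, ∀ t ∈ Icc (0:ℝ) T, HasDerivAt (fun s => Z s i j) (Z' t i j) t)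
    (hZT : ∀ ξ : Fin N → ℝ, (∑ i, ξ i ^ 2) = 1 → 0 < quadForm (Z T) ξ)
    (hcross : ∀ t ∈ Ico (0:ℝ) T, ∀ ξ : Fin N → ℝ, (∑ i, ξ i ^ 2) = 1 →
      (Z t) *ᵥ ξ = 0 → quadForm (Z' t) ξ < 0) :
    ∀ t ∈ Icc (0:ℝ) T, ∀ ξ : Fin N → ℝ, (∑ i, ξ i ^ 2) = 1 → 0 < quadForm (Z t) ξ := by
  by_contra hcon
  push_neg at hcon
  obtain ⟨t₀, ht₀, ξ₀, hξ₀, hq₀⟩ := hcon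
  set sph : Set (Fin N → ℝ) := {ξ | (∑ i, ξ i ^ 2) = 1} with hsph
  have hsph_closed : IsClosed sph := by
    have : Continuous (fun ξ : Fin N → ℝ => ∑ i, ξ i ^ 2) :=
      continuous_finset_sum _ fun i _ => (continuous_apply i).pow 2
    exact isClosed_eq this continuous_const
  have hsph_cpt : IsCompact sph := by
    apply Metric.isCompact_of_isClosed_isBounded hsph_closed
    apply (Metric.isBounded_closedBall (x := (0 : Fin N → ℝ)) (r := 1)).subset
    intro ξ hξ
    rw [Metric.mem_closedBall, dist_zero_right]
    rw [pi_norm_le_iff_of_nonneg zero_le_one]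
    intro i
    rw [hsph, mem_setOf_eq] at hξ
    have h1 : ξ i ^ 2 ≤ 1 := by
      have := Finset.single_le_sum (fun j _ => sq_nonneg (ξ j)) (Finset.mem_univ i)
      linarith [hξ ▸ this]
    rw [Real.norm_eq_abs, abs_le]
    constructor <;> nlinarith
  have hcontZ : ∀ i j, ∀ t ∈ Icc (0:ℝ) T, ContinuousAt (fun s => Z s i j) t :=
    fun i j t ht => (hderiv i j t ht).continuousAt
  have hFcont : ContinuousOn (fun p : ℝ × (Fin N → ℝ) => quadForm (Z p.1) p.2)
      (Icc 0 T ×ˢ (univ : Set (Fin N → ℝ))) := by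
    unfold quadForm
    apply continuousOn_finset_sum
    intro i _
    apply continuousOn_finset_sum
    intro j _
    apply ContinuousOn.mul
    apply ContinuousOn.mul
    · exact ((continuous_apply i).comp continuous_snd).continuousOn
    · intro p hp
      exact ((hcontZ i j p.1 hp.1).comp continuousAt_fst).continuousWithinAt
    · exact ((continuous_apply j).comp continuous_snd).continuousOn
  set Kset : Set (ℝ × (Fin N → ℝ)) :=
    (Icc 0 T ×ˢ sph) ∩ (fun p : ℝ × (Fin N → ℝ) => quadForm (Z p.1) p.2) ⁻¹' (Iic 0) with hKset
  have hKclosed : IsClosed Kset :=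
    (hFcont.mono (prod_mono_right (subset_univ _))).preimage_isClosed_of_isClosed
      (isClosed_Icc.prod hsph_closed) isClosed_Iic
  have hKcpt : IsCompact Kset :=
    IsCompact.of_isClosed_subset (isCompact_Icc.prod hsph_cpt) hKclosed inter_subset_left
  have hKne : Kset.Nonempty := ⟨(t₀, ξ₀), ⟨⟨ht₀, hξ₀⟩, hq₀⟩⟩
  set Sset := Prod.fst '' Kset with hSset
  have hScpt : IsCompact Sset := hKcpt.image continuous_fst
  have hSne : Sset.Nonempty := hKne.image _
  obtain ⟨⟨t1, ξs⟩, hK1, ht1⟩ := hScpt.sSup_mem hSne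
  obtain ⟨⟨hts_Icc, hξs⟩, hqs⟩ := hK1
  simp only at ht1 hts_Icc hξs hqs
  rw [Set.mem_preimage, Set.mem_Iic] at hqs
  rw [hsph, mem_setOf_eq] at hξs
  have hub : ∀ t ∈ Sset, t ≤ t1 := fun t ht => ht1 ▸ le_csSup hScpt.bddAbove ht
  have htltT : t1 < T := by
    rcases lt_or_eq_of_le hts_Icc.2 with h | h
    · exact h
    · exact absurd (h ▸ hZT ξs hξs) (not_lt.mpr hqs)
  have hafter : ∀ t, t1 < t → t ∈ Icc (0:ℝ) T → ∀ η : Fin N → ℝ, (∑ i, η i ^ 2) = 1 →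
      0 < quadForm (Z t) η := by
    intro t h1 h2 η hη
    by_contra hc
    push_neg at hc
    have hmem : t ∈ Sset := ⟨(t, η), ⟨⟨h2, hη⟩, hc⟩, rfl⟩
    linarith [hub t hmem]
  have hafter' : ∀ t, t1 < t → t ∈ Icc (0:ℝ) T → ∀ η, 0 ≤ quadForm (Z t) η :=
    fun t h1 h2 => nonneg_of_unit_pos (hafter t h1 h2)
  have hcontq : ∀ η : Fin N → ℝ, ContinuousAt (fun t => quadForm (Z t) η) t1 :=
    fun η => (hasDerivAt_quadForm (fun i j => hderiv i j t1 hts_Icc) η).continuousAt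
  have hpsd : ∀ η, 0 ≤ quadForm (Z t1) η := by
    intro η
    have htend : Filter.Tendsto (fun t => quadForm (Z t) η) (nhdsWithin t1 (Ioi t1))
        (nhds (quadForm (Z t1) η)) := (hcontq η).tendsto.mono_left nhdsWithin_le_nhds
    apply ge_of_tendsto htend
    filter_upwards [Ioc_mem_nhdsGT_of_mem ⟨le_refl t1, htltT⟩] with t ht2
    exact hafter' t ht2.1 ⟨le_trans hts_Icc.1 (le_of_lt ht2.1), ht2.2⟩ η
  have hq0 : quadForm (Z t1) ξs = 0 := le_antisymm hqs (hpsd ξs)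
  have hnull : Z t1 *ᵥ ξs = 0 :=
    mulVec_eq_zero_of_psd _ (hsym t1 hts_Icc) hpsd ξs hq0
  have hdlt : quadForm (Z' t1) ξs < 0 := hcross t1 ⟨hts_Icc.1, htltT⟩ ξs hξs hnull
  have hfd : HasDerivAt (fun t => quadForm (Z t) ξs) (quadForm (Z' t1) ξs) t1 :=
    hasDerivAt_quadForm (fun i j => hderiv i j t1 hts_Icc) ξs
  have hge : 0 ≤ quadForm (Z' t1) ξs := by
    have hslope := (hfd.hasDerivWithinAt (s := Ioi t1))
    rw [hasDerivWithinAt_iff_tendsto_slope,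
      Set.diff_singleton_eq_self Set.notMem_Ioi_self] at hslope
    apply ge_of_tendsto hslope
    filter_upwards [Ioc_mem_nhdsGT_of_mem ⟨le_refl t1, htltT⟩, self_mem_nhdsWithin]
      with t htIoc htIoi
    rw [slope_def_field]
    have hnum : 0 ≤ quadForm (Z t) ξs :=
      hafter' t htIoi ⟨le_trans hts_Icc.1 (le_of_lt htIoc.1), htIoc.2⟩ ξs
    rw [Set.mem_Ioi] at htIoi
    apply div_nonneg
    · linarith [hq0, hnum]
    · linarith
  linarith

lemma quad_mul_left (Y A : Matrix (Fin N) (Fin N) ℝ) (ξ v : Fin N → ℝ)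
    (hsym : Y.transpose = Y) (hv : Y *ᵥ ξ = v) :
    quadForm (Y * A) ξ = v ⬝ᵥ (A *ᵥ ξ) := by
  rw [quadForm_eq, ← Matrix.mulVec_mulVec, Matrix.dotProduct_mulVec,
    ← Matrix.mulVec_transpose, hsym, hv]

lemma quad_mul_right (A Y : Matrix (Fin N) (Fin N) ℝ) (ξ v : Fin N → ℝ)
    (hv : Y *ᵥ ξ = v) :
    quadForm (A * Y) ξ = ξ ⬝ᵥ (A *ᵥ v) := by
  rw [quadForm_eq, ← Matrix.mulVec_mulVec, hv]

lemma quad_sandwich (Y B : Matrix (Fin N) (Fin N) ℝ) (ξ v : Fin N → ℝ)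
    (hsym : Y.transpose = Y) (hv : Y *ᵥ ξ = v) :
    quadForm (Y * B * Y) ξ = v ⬝ᵥ (B *ᵥ v) := by
  rw [quadForm_eq, ← Matrix.mulVec_mulVec, ← Matrix.mulVec_mulVec, hv,
    Matrix.dotProduct_mulVec, ← Matrix.mulVec_transpose, hsym, hv]

lemma sph_compact : IsCompact {ξ : Fin N → ℝ | (∑ i, ξ i ^ 2) = 1} := by
  have hcl : IsClosed {ξ : Fin N → ℝ | (∑ i, ξ i ^ 2) = 1} :=
    isClosed_eq (continuous_finset_sum _ fun i _ => (continuous_apply i).pow 2) continuous_const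
  apply Metric.isCompact_of_isClosed_isBounded hcl
  apply (Metric.isBounded_closedBall (x := (0 : Fin N → ℝ)) (r := 1)).subset
  intro ξ hξ
  rw [mem_setOf_eq] at hξ
  rw [Metric.mem_closedBall, dist_zero_right, pi_norm_le_iff_of_nonneg zero_le_one]
  intro i
  have h1 : ξ i ^ 2 ≤ 1 := by
    have := Finset.single_le_sum (fun j _ => sq_nonneg (ξ j)) (Finset.mem_univ i)
    linarith [hξ ▸ this]
  rw [Real.norm_eq_abs, abs_le]
  constructor <;> nlinarith

lemma exists_quad_bound (T : ℝ) (M : ℝ → Matrix (Fin N) (Fin N) ℝ)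
    (hM : ∀ i j, ContinuousOn (fun t => M t i j) (Icc 0 T)) :
    ∃ a : ℝ, 0 ≤ a ∧ ∀ t ∈ Icc (0:ℝ) T, ∀ ξ : Fin N → ℝ, (∑ i, ξ i ^ 2) = 1 →
      |quadForm (M t) ξ| ≤ a := by
  have hcpt : IsCompact ((Icc (0:ℝ) T) ×ˢ {ξ : Fin N → ℝ | (∑ i, ξ i ^ 2) = 1}) :=
    isCompact_Icc.prod sph_compact
  have hFcont : ContinuousOn (fun p : ℝ × (Fin N → ℝ) => quadForm (M p.1) p.2)
      ((Icc (0:ℝ) T) ×ˢ {ξ : Fin N → ℝ | (∑ i, ξ i ^ 2) = 1}) := by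
    unfold quadForm
    apply continuousOn_finset_sum
    intro i _
    apply continuousOn_finset_sum
    intro j _
    apply ContinuousOn.mul
    apply ContinuousOn.mul
    · exact ((continuous_apply i).comp continuous_snd).continuousOn
    · exact (hM i j).comp continuous_fst.continuousOn (fun p hp => hp.1)
    · exact ((continuous_apply j).comp continuous_snd).continuousOn
  obtain ⟨C, hC⟩ := hcpt.exists_bound_of_continuousOn hFcont
  refine ⟨max C 0, le_max_right _ _, fun t ht ξ hξ => ?_⟩
  have := hC (t, ξ) ⟨ht, hξ⟩
  rw [Real.norm_eq_abs] at this
  exact le_trans this (le_max_left _ _)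

lemma part_i {N : ℕ} {T : ℝ} (hT : 0 < T)
    {Q B A : ℝ → Matrix (Fin N) (Fin N) ℝ} {U : Matrix (Fin N) (Fin N) ℝ}
    {Y : ℝ → Matrix (Fin N) (Fin N) ℝ} (hR : IsRiccatiSolution N T Q B A U Y)
    (hQ : ∀ t ∈ Icc (0:ℝ) T, ∀ ξ, 0 ≤ quadForm (Q t) ξ)
    (hU : ∀ ξ, 0 ≤ quadForm U ξ) :
    ∀ t ∈ Icc (0:ℝ) T, ∀ ξ, 0 ≤ quadForm (Y t) ξ := by
  obtain ⟨hQc, hBc, hAc, hQs, hBs, hUs, hYs, hYd, hYT⟩ := hR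
  obtain ⟨a, ha0, hAb⟩ := exists_quad_bound T A hAc
  obtain ⟨b, hb0, hBb⟩ := exists_quad_bound T B hBc
  set K : ℝ := 2 * a + b + 1 with hKdef
  have hK0 : 0 < K := by positivity
  have main : ∀ ε : ℝ, 0 < ε → ε ≤ Real.exp (-(K * T)) → ∀ t ∈ Icc (0:ℝ) T,
      ∀ ξ : Fin N → ℝ, (∑ i, ξ i ^ 2) = 1 →
      -(ε * Real.exp (K * T)) < quadForm (Y t) ξ := by
    intro ε hε hεle
    set β : ℝ → ℝ := fun s => ε * Real.exp (K * (T - s)) with hβdef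
    have hβpos : ∀ s, 0 < β s := fun s => by positivity
    have hβle : ∀ s, 0 ≤ s → β s ≤ ε * Real.exp (K * T) := by
      intro s hs
      apply mul_le_mul_of_nonneg_left _ hε.le
      apply Real.exp_le_exp.mpr
      nlinarith
    have hβ1 : ∀ s, 0 ≤ s → β s ≤ 1 := by
      intro s hs
      calc β s ≤ ε * Real.exp (K * T) := hβle s hs
        _ ≤ Real.exp (-(K * T)) * Real.exp (K * T) := by
            have := Real.exp_pos (K * T); nlinarith
        _ = 1 := by rw [← Real.exp_add]; simp
    have hβderiv : ∀ s, HasDerivAt β (-K * β s) s := by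
      intro s
      have h1 : HasDerivAt (fun u : ℝ => K * (T - u)) (-K) s := by
        simpa using ((hasDerivAt_id s).const_sub T).const_mul K
      have h2 := (h1.exp).const_mul ε
      convert h2 using 1
      exacts [rfl, rfl, by simp [hβdef]; ring]
    set Z : ℝ → Matrix (Fin N) (Fin N) ℝ := fun t => Y t + β t • 1 with hZdef
    set Z' : ℝ → Matrix (Fin N) (Fin N) ℝ := fun t =>
      -(Q t + Y t * A t + (A t).transpose * Y t + Y t * B t * Y t) + (-K * β t) • 1 with hZ'def
    have hkey := key T hT Z Z' ?_ ?_ ?_ ?_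
    · intro t ht ξ hξ
      have h := hkey t ht ξ hξ
      rw [hZdef] at h
      simp only at h
      rw [quadForm_add, quadForm_smul_one, hξ, mul_one] at h
      have := hβle t ht.1
      linarith
    · intro t ht
      simp only [hZdef, Matrix.transpose_add, Matrix.transpose_smul, Matrix.transpose_one,
        hYs t ht]
    · intro i j t ht
      have h := (hYd i j t ht).fun_add ((hβderiv t).mul_const ((1 : Matrix (Fin N) (Fin N) ℝ) i j))
      simpa [hZdef, hZ'def, Matrix.add_apply, Matrix.smul_apply, smul_eq_mul] using h
    · intro ξ hξ
      simp only [hZdef]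
      rw [quadForm_add, quadForm_smul_one, hξ, mul_one, hYT]
      have : β T = ε := by simp [hβdef]
      rw [this]
      linarith [hU ξ]
    · intro t ht ξ hξ hnull
      have hIcc : t ∈ Icc (0:ℝ) T := ⟨ht.1, ht.2.le⟩
      have hYξ : Y t *ᵥ ξ = (-(β t)) • ξ := by
        have hz : Z t *ᵥ ξ = Y t *ᵥ ξ + β t • ξ := by
          simp [hZdef, Matrix.add_mulVec, Matrix.smul_mulVec, Matrix.one_mulVec]
        rw [hz] at hnull
        have := eq_neg_of_add_eq_zero_left hnull
        rw [this, neg_smul]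
      have hqYA : quadForm (Y t * A t) ξ = -(β t) * quadForm (A t) ξ := by
        rw [quad_mul_left (Y t) (A t) ξ _ (hYs t hIcc) hYξ, smul_dotProduct, ← quadForm_eq,
          smul_eq_mul]
      have hqAY : quadForm ((A t).transpose * Y t) ξ = -(β t) * quadForm (A t) ξ := by
        rw [quad_mul_right ((A t).transpose) (Y t) ξ _ hYξ, Matrix.mulVec_smul,
          dotProduct_smul, smul_eq_mul, ← quadForm_eq, quadForm_transpose]
      have hqYBY : quadForm (Y t * B t * Y t) ξ = (β t)^2 * quadForm (B t) ξ := by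
        rw [quad_sandwich (Y t) (B t) ξ _ (hYs t hIcc) hYξ, Matrix.mulVec_smul,
          smul_dotProduct, dotProduct_smul, smul_eq_mul, smul_eq_mul, ← quadForm_eq]
        ring
      simp only [hZ'def]
      rw [quadForm_add, quadForm_neg, quadForm_add, quadForm_add, quadForm_add,
        quadForm_smul_one, hξ, mul_one, hqYA, hqAY, hqYBY]
      have hA1 := abs_le.mp (hAb t hIcc ξ hξ)
      have hB1 := abs_le.mp (hBb t hIcc ξ hξ)
      have hq := hQ t hIcc ξ
      have hβp := hβpos t
      have hβ1' := hβ1 t ht.1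
      have h1 : 2 * (β t) * quadForm (A t) ξ ≤ 2 * (β t) * a := by nlinarith
      have h2 : -((β t)^2 * quadForm (B t) ξ) ≤ (β t) * b := by
        have e1 : -((β t)^2 * quadForm (B t) ξ) = (β t)^2 * (-(quadForm (B t) ξ)) := by ring
        have e2 : (β t)^2 * (-(quadForm (B t) ξ)) ≤ (β t)^2 * b :=
          mul_le_mul_of_nonneg_left (by linarith [hB1.1]) (sq_nonneg _)
        have e3 : (β t)^2 * b ≤ (β t) * b := by
          nlinarith [mul_nonneg (mul_nonneg hβp.le (by linarith : (0:ℝ) ≤ 1 - β t)) hb0]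
        linarith
      nlinarith
  intro t ht ξ
  have hunit : ∀ η : Fin N → ℝ, (∑ i, η i ^ 2) = 1 → 0 ≤ quadForm (Y t) η := by
    intro η hη
    by_contra hneg
    push_neg at hneg
    set q := quadForm (Y t) η with hq
    set E := Real.exp (K * T) with hE
    have hEpos : 0 < E := Real.exp_pos _
    set ε : ℝ := min (Real.exp (-(K * T))) ((-q) / (2 * E)) with hεdef
    have hεpos : 0 < ε := lt_min (Real.exp_pos _) (div_pos (by linarith) (by positivity))
    have h1 := main ε hεpos (min_le_left _ _) t ht η hη
    have h2 : ε * E ≤ (-q) / 2 := by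
      have := min_le_right (Real.exp (-(K * T))) ((-q) / (2 * E))
      calc ε * E ≤ ((-q) / (2 * E)) * E := by nlinarith
        _ = (-q) / 2 := by field_simp
    have : -(ε * E) < q := h1
    linarith
  have := le_of_unit_le (S := -(Y t)) (C := 0) (le_refl 0)
    (fun η hη => by rw [quadForm_neg]; linarith [hunit η hη]) ξ
  rw [quadForm_neg] at this
  linarith

lemma part_ii {N : ℕ} (hN : 1 ≤ N) {c T : ℝ} (hc : 0 ≤ c) (hT : 0 < T)
    {Q B A : ℝ → Matrix (Fin N) (Fin N) ℝ} {U : Matrix (Fin N) (Fin N) ℝ}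
    {Y : ℝ → Matrix (Fin N) (Fin N) ℝ} (hR : IsRiccatiSolution N T Q B A U Y)
    (hB : ∀ t ∈ Icc (0:ℝ) T, ∀ ξ, quadForm (B t) ξ ≤ 0)
    (hQb : ∀ t ∈ Icc (0:ℝ) T, ∀ ξ : Fin N → ℝ, quadForm (Q t) ξ ≤ c / N * ∑ i, (ξ i)^2)
    (hAb : ∀ t ∈ Icc (0:ℝ) T, ∀ ξ : Fin N → ℝ,
      Real.sqrt (∑ i, ((A t).mulVec ξ i)^2) ≤ c * Real.sqrt (∑ i, (ξ i)^2))
    (hUb : ∀ ξ : Fin N → ℝ, quadForm U ξ ≤ c / N * ∑ i, (ξ i)^2) :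
    ∀ t ∈ Icc (0:ℝ) T, ∀ ξ : Fin N → ℝ, (∑ i, ξ i ^ 2) = 1 →
      quadForm (Y t) ξ ≤ c / N * Real.exp ((2*c+1) * T) := by
  obtain ⟨hQc, hBc, hAc, hQs, hBs, hUs, hYs, hYd, hYT⟩ := hR
  set E := Real.exp ((2*c+1)*T) with hEdef
  have hEpos : 0 < E := Real.exp_pos _
  have hccN : 0 ≤ c / (N:ℝ) := by positivity
  have main : ∀ ε : ℝ, 0 < ε → ∀ t ∈ Icc (0:ℝ) T, ∀ ξ : Fin N → ℝ, (∑ i, ξ i ^ 2) = 1 →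
      quadForm (Y t) ξ < (c/N + ε) * E := by
    intro ε hε
    set y : ℝ → ℝ := fun s => (c/N + ε) * Real.exp ((2*c+1) * (T - s)) with hydef
    have hypos : ∀ s, 0 < y s := fun s => by positivity
    have hyge : ∀ s, s ≤ T → c/N + ε ≤ y s := by
      intro s hs
      have h1 : (1:ℝ) ≤ Real.exp ((2*c+1) * (T - s)) :=
        Real.one_le_exp (by nlinarith)
      have h2 := mul_le_mul_of_nonneg_left h1 (by positivity : (0:ℝ) ≤ c/N + ε)
      simpa [hydef] using h2
    have hyle : ∀ s, 0 ≤ s → y s ≤ (c/N + ε) * E := by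
      intro s hs
      apply mul_le_mul_of_nonneg_left _ (by positivity)
      apply Real.exp_le_exp.mpr
      nlinarith
    have hyderiv : ∀ s, HasDerivAt y (-(2*c+1) * y s) s := by
      intro s
      have h1 : HasDerivAt (fun u : ℝ => (2*c+1) * (T - u)) (-(2*c+1)) s := by
        simpa using ((hasDerivAt_id s).const_sub T).const_mul (2*c+1)
      have h2 := (h1.exp).const_mul (c/N + ε)
      convert h2 using 1
      exacts [rfl, rfl, by simp [hydef]; ring]
    set Z : ℝ → Matrix (Fin N) (Fin N) ℝ := fun t => y t • 1 - Y t with hZdef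
    set Z' : ℝ → Matrix (Fin N) (Fin N) ℝ := fun t =>
      (-(2*c+1) * y t) • 1 - -(Q t + Y t * A t + (A t).transpose * Y t + Y t * B t * Y t)
      with hZ'def
    have hkey := key T hT Z Z' ?_ ?_ ?_ ?_
    · intro t ht ξ hξ
      have h := hkey t ht ξ hξ
      rw [hZdef] at h
      simp only at h
      rw [quadForm_sub, quadForm_smul_one, hξ, mul_one] at h
      have := hyle t ht.1
      linarith
    · intro t ht
      simp only [hZdef, Matrix.transpose_sub, Matrix.transpose_smul, Matrix.transpose_one,
        hYs t ht]
    · intro i j t ht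
      have h := ((hyderiv t).mul_const ((1 : Matrix (Fin N) (Fin N) ℝ) i j)).fun_sub (hYd i j t ht)
      simpa [hZdef, hZ'def, Matrix.sub_apply, Matrix.smul_apply, smul_eq_mul] using h
    · intro ξ hξ
      simp only [hZdef]
      rw [quadForm_sub, quadForm_smul_one, hξ, mul_one, hYT]
      have hyT : y T = c/N + ε := by simp [hydef]
      rw [hyT]
      have := hUb ξ
      rw [hξ, mul_one] at this
      linarith
    · intro t ht ξ hξ hnull
      have hIcc : t ∈ Icc (0:ℝ) T := ⟨ht.1, ht.2.le⟩
      have hYξ : Y t *ᵥ ξ = (y t) • ξ := by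
        have hz : Z t *ᵥ ξ = y t • ξ - Y t *ᵥ ξ := by
          simp [hZdef, Matrix.sub_mulVec, Matrix.smul_mulVec, Matrix.one_mulVec]
        rw [hz, sub_eq_zero] at hnull
        exact hnull.symm
      have hsq1 : Real.sqrt (∑ i, ξ i ^ 2) = 1 := by rw [hξ, Real.sqrt_one]
      have hdot : ξ ⬝ᵥ (A t *ᵥ ξ) ≤ c := by
        calc ξ ⬝ᵥ (A t *ᵥ ξ) ≤ Real.sqrt (∑ i, ξ i ^ 2) *
              Real.sqrt (∑ i, (A t *ᵥ ξ) i ^ 2) := dot_le_sqrt _ _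
          _ = Real.sqrt (∑ i, ((A t).mulVec ξ) i ^ 2) := by rw [hsq1, one_mul]
          _ ≤ c * Real.sqrt (∑ i, ξ i ^ 2) := hAb t hIcc ξ
          _ = c := by rw [hsq1, mul_one]
      have hqA : quadForm (A t) ξ ≤ c := by rw [quadForm_eq]; exact hdot
      have hy0 := (hypos t).le
      have hqYA : quadForm (Y t * A t) ξ ≤ y t * c := by
        rw [quad_mul_left (Y t) (A t) ξ _ (hYs t hIcc) hYξ, smul_dotProduct, smul_eq_mul]
        exact mul_le_mul_of_nonneg_left hdot hy0
      have hqAY : quadForm ((A t).transpose * Y t) ξ ≤ y t * c := by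
        rw [quad_mul_right ((A t).transpose) (Y t) ξ _ hYξ, Matrix.mulVec_smul,
          dotProduct_smul, smul_eq_mul]
        apply mul_le_mul_of_nonneg_left _ hy0
        rw [← quadForm_eq, quadForm_transpose]
        exact hqA
      have hqYBY : quadForm (Y t * B t * Y t) ξ ≤ 0 := by
        rw [quad_sandwich (Y t) (B t) ξ _ (hYs t hIcc) hYξ, Matrix.mulVec_smul,
          smul_dotProduct, dotProduct_smul, smul_eq_mul, smul_eq_mul, ← quadForm_eq]
        have := hB t hIcc ξ
        nlinarith [sq_nonneg (y t)]
      have hqQ : quadForm (Q t) ξ ≤ c / N := by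
        have := hQb t hIcc ξ
        rw [hξ, mul_one] at this
        exact this
      simp only [hZ'def]
      rw [quadForm_sub, quadForm_smul_one, hξ, mul_one, quadForm_neg,
        quadForm_add, quadForm_add, quadForm_add]
      have hyget := hyge t ht.2.le
      nlinarith
  intro t ht ξ hξ
  refine le_of_forall_pos_le_add fun δ hδ => ?_
  have h1 := main (δ / E) (by positivity) t ht ξ hξ
  have h2 : (c/N + δ/E) * E = c/N * E + δ := by field_simp
  linarith

end Riccati

/-- (i) Positivity propagation for the matrix Riccati equation, and
(ii) the uniform-in-`N` bound `0 ≤ ξᵀY(t)ξ ≤ (C̃/N)|ξ|²` under additional bounds. -/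
theorem riccati_positivity_and_global_bound :
    (∀ (N : ℕ), 1 ≤ N → ∀ T : ℝ, 0 < T →
      ∀ (Q B A : ℝ → Matrix (Fin N) (Fin N) ℝ) (U : Matrix (Fin N) (Fin N) ℝ)
        (Y : ℝ → Matrix (Fin N) (Fin N) ℝ),
        IsRiccatiSolution N T Q B A U Y →
        (∀ t ∈ Set.Icc (0 : ℝ) T, ∀ ξ, 0 ≤ quadForm (Q t) ξ) →
        (∀ ξ, 0 ≤ quadForm U ξ) →
        ∀ t ∈ Set.Icc (0 : ℝ) T, ∀ ξ, 0 ≤ quadForm (Y t) ξ) ∧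
    (∀ c T : ℝ, 0 ≤ c → 0 < T →
      ∃ Ct : ℝ, 0 < Ct ∧
        ∀ (N : ℕ), 1 ≤ N →
        ∀ (Q B A : ℝ → Matrix (Fin N) (Fin N) ℝ) (U : Matrix (Fin N) (Fin N) ℝ)
          (Y : ℝ → Matrix (Fin N) (Fin N) ℝ),
          IsRiccatiSolution N T Q B A U Y →
          (∀ t ∈ Set.Icc (0 : ℝ) T, ∀ ξ, 0 ≤ quadForm (Q t) ξ) →
          (∀ ξ, 0 ≤ quadForm U ξ) →
          (∀ t ∈ Set.Icc (0 : ℝ) T, ∀ ξ, quadForm (B t) ξ ≤ 0) →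
          (∀ t ∈ Set.Icc (0 : ℝ) T, ∀ ξ : Fin N → ℝ,
            quadForm (Q t) ξ ≤ c / N * ∑ i, (ξ i) ^ 2) →
          (∀ t ∈ Set.Icc (0 : ℝ) T, ∀ ξ : Fin N → ℝ,
            Real.sqrt (∑ i, ((A t).mulVec ξ i) ^ 2) ≤ c * Real.sqrt (∑ i, (ξ i) ^ 2)) →
          (∀ ξ : Fin N → ℝ, quadForm U ξ ≤ c / N * ∑ i, (ξ i) ^ 2) →
          ∀ t ∈ Set.Icc (0 : ℝ) T, ∀ ξ : Fin N → ℝ,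
            0 ≤ quadForm (Y t) ξ ∧ quadForm (Y t) ξ ≤ Ct / N * ∑ i, (ξ i) ^ 2) := by
  constructor
  · intro N hN T hT Q B A U Y hR hQ hU
    exact Riccati.part_i hT hR hQ hU
  · intro c T hc hT
    refine ⟨(c + 1) * Real.exp ((2 * c + 1) * T), by positivity, ?_⟩
    intro N hN Q B A U Y hR hQ hU hB hQb hAb hUb t ht ξ
    have hEpos : (0:ℝ) < Real.exp ((2 * c + 1) * T) := Real.exp_pos _
    have hNpos : (0:ℝ) < (N:ℝ) := by exact_mod_cast Nat.lt_of_lt_of_le Nat.zero_lt_one hN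
    constructor
    · exact Riccati.part_i hT hR hQ hU t ht ξ
    · have hub := Riccati.part_ii hN hc hT hR hB hQb hAb hUb
      have hC0 : 0 ≤ c / (N:ℝ) * Real.exp ((2 * c + 1) * T) := by positivity
      have hle := Riccati.le_of_unit_le hC0 (fun η hη => hub t ht η hη) ξ
      refine le_trans hle ?_
      apply mul_le_mul_of_nonneg_right _ (Finset.sum_nonneg fun i _ => sq_nonneg _)
      rw [div_mul_eq_mul_div]
      gcongr
      linarith
end
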